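/- arXiv:2410.09475 — 9 statements merged into one kernel-verified Lean document; each statement's English description precedes it below -/
import Mathlib

section
/- Let p be a prime number, let Ω be an algebraic closure of ℚ_p, and let K be a finite extension of ℚ_p (a field with a ℚ_p-algebra structure, finite-dimensional over ℚ_p). Let P be the (finite) set of ℚ_p-algebra homomorphisms K → Ω, and fix one element ι ∈ P, giving Ω the structure of a K-algebra via ι. Then the plectic Galois group 𝒢_{K,plec} := Aut_{K-alg}(K ⊗_{ℚ_p} Ω) is isomorphic, as an abstract group, to the wreath product (P → Gal(Ω/K)) ⋊ Perm(P), i.e. the semidirect product of the group of functions P → Aut_{K-alg}(Ω) (with pointwise multiplication) by the symmetric group of P, where a permutation ω acts on a function g by (ω·g)(τ) = g(ω⁻¹(τ)). In particular the image of the factor P → Gal(Ω/K) corresponds to a normal subgroup with the image of Perm(P) as a complement. -/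
/-!
Over `Ω` the algebra `K ⊗ Ω` splits: `x ⊗ y ↦ (τ x * y)_τ` is an isomorphism onto `Ω ^ P`,
surjective by Dedekind's independence of the characters `τ`, and injective since both sides have
dimension `[K : ℚ_p] = #P`. Twisting the `τ`-th factor by an automorphism `σ_τ` of `Ω` with
`σ_τ ∘ ι = τ` makes `K` act diagonally through `ι`. Finally, a `K`-algebra automorphism of a finite
power `A ^ P` of a domain permutes the factors and acts on them by automorphisms of `A`: each
coordinate of it is a ring map to a domain, whose prime kernel contains the kernel of a projection.
-/

open scoped TensorProduct

/-- The wreath action: a permutation `ω` of `P` acts on functions `P → G` by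
`(ω · g) τ = g (ω⁻¹ τ)`. -/
def wreathAction (P : Type*) (G : Type*) [Group G] : Equiv.Perm P →* MulAut (P → G) where
  toFun ω :=
    { toFun := fun g τ => g (ω.symm τ)
      invFun := fun g τ => g (ω τ)
      left_inv := fun g => by funext τ; simp
      right_inv := fun g => by funext τ; simp
      map_mul' := fun g h => rfl }
  map_one' := by
    ext g τ
    simp
    rfl
  map_mul' := fun ω₁ ω₂ => by
    ext g τ
    rfl

open Function

theorem AlgHom.exists_apply_eq_apply_const {R ι A B : Type*} [CommRing R] [CommRing A]
    [Algebra R A] [CommRing B] [IsDomain B] [Algebra R B] [_root_.Finite ι]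
    (ψ : (ι → A) →ₐ[R] B) : ∃ i, ∀ f, ψ f = ψ (const ι (f i)) := by
  obtain ⟨i, q, hq⟩ :=
    PrimeSpectrum.exists_comap_evalRingHom_eq ⟨RingHom.ker ψ, RingHom.ker_isPrime ψ⟩
  have hker : RingHom.ker ψ = q.asIdeal.comap (Pi.evalRingHom (fun _ => A) i) :=
    congr_arg PrimeSpectrum.asIdeal hq.symm
  refine ⟨i, fun f => ?_⟩
  have hf : f - const ι (f i) ∈ RingHom.ker ψ := by simp [hker]
  rwa [RingHom.mem_ker, map_sub, sub_eq_zero] at hf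

section WreathProduct

variable (R ι A : Type*) [CommRing R] [CommRing A] [Algebra R A]

noncomputable def wreathToAlgEquivPi :
    (ι → (A ≃ₐ[R] A)) ⋊[wreathAction ι (A ≃ₐ[R] A)] Equiv.Perm ι →* ((ι → A) ≃ₐ[R] (ι → A)) where
  toFun w :=
    { toFun f τ := w.left τ (f (w.right⁻¹ τ))
      invFun f τ := (w.left (w.right τ)).symm (f (w.right τ))
      left_inv f := by ext; simp
      right_inv f := by ext; simp
      map_mul' _ _ := by ext; simp
      map_add' _ _ := by ext; simp
      commutes' _ := by ext; simp }
  map_one' := rfl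
  map_mul' _ _ := by ext; rfl

variable {R ι A}

@[simp]
theorem wreathToAlgEquivPi_apply (w : (ι → (A ≃ₐ[R] A)) ⋊[wreathAction ι (A ≃ₐ[R] A)] Equiv.Perm ι)
    (f : ι → A) (τ : ι) : wreathToAlgEquivPi R ι A w f τ = w.left τ (f (w.right⁻¹ τ)) := rfl

theorem wreathToAlgEquivPi_injective [Nontrivial A] :
    Injective (wreathToAlgEquivPi R ι A) := by
  classical
  rw [injective_iff_map_eq_one]
  rintro ⟨g, ω⟩ h
  have hω : ω = 1 := Equiv.ext fun τ => by
    by_contra hne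
    exact hne (by simpa [Pi.single_apply] using congr($h (Pi.single τ 1) (ω τ)))
  subst hω
  have hg : g = 1 := funext fun τ => AlgEquiv.ext fun y => by
    simpa using congr($h (const ι y) τ)
  rw [hg]
  rfl

theorem leftInverse_of_apply_eq_apply_const [Nontrivial A] {φ : (ι → A) ≃ₐ[R] (ι → A)}
    {u u' : ι → ι}
    (hu : ∀ f τ, φ f τ = φ (const ι (f (u τ))) τ)
    (hu' : ∀ f τ, φ.symm f τ = φ.symm (const ι (f (u' τ))) τ) :
    LeftInverse u' u := by
  classical
  intro τ
  by_contra hne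
  have h := congr_fun (φ.apply_symm_apply (Pi.single τ 1)) τ
  rw [hu, hu', Pi.single_apply, if_neg hne] at h
  simp at h

theorem wreathToAlgEquivPi_surjective [IsDomain A] [Finite ι] :
    Surjective (wreathToAlgEquivPi R ι A) := by
  intro φ
  have coordinate : ∀ φ : (ι → A) ≃ₐ[R] (ι → A), ∃ u : ι → ι,
      ∀ f τ, φ f τ = φ (const ι (f (u τ))) τ := fun φ => by
    choose u hu using fun τ =>
      ((Pi.evalAlgHom R (fun _ => A) τ).comp φ.toAlgHom).exists_apply_eq_apply_const
    exact ⟨u, fun f τ => hu τ f⟩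
  obtain ⟨u, hu⟩ := coordinate φ
  obtain ⟨u', hu'⟩ := coordinate φ.symm
  have hu'u : LeftInverse u' u := leftInverse_of_apply_eq_apply_const hu hu'
  have huu' : LeftInverse u u' := leftInverse_of_apply_eq_apply_const hu' (by simpa using hu)
  let g : ι → (A ≃ₐ[R] A) := fun τ => AlgEquiv.ofAlgHom
    ((Pi.evalAlgHom R _ τ).comp (φ.toAlgHom.comp (Pi.constAlgHom R ι A)))
    ((Pi.evalAlgHom R _ (u τ)).comp (φ.symm.toAlgHom.comp (Pi.constAlgHom R ι A)))
    (AlgHom.ext fun y => by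
      change φ (const ι (φ.symm (const ι y) (u τ))) τ = y
      rw [← hu, φ.apply_symm_apply, const_apply])
    (AlgHom.ext fun y => by
      change φ.symm (const ι (φ (const ι y) τ)) (u τ) = y
      have h := hu' (φ (const ι y)) (u τ)
      rw [hu'u τ, φ.symm_apply_apply, const_apply] at h
      exact h.symm)
  exact ⟨⟨g, ⟨u', u, huu', hu'u⟩⟩, AlgEquiv.ext fun f => funext fun τ => (hu f τ).symm⟩

end WreathProduct

noncomputable def AlgEquiv.piAutMulEquivWreath (R ι A : Type*) [CommRing R] [CommRing A]
    [IsDomain A] [Algebra R A] [Finite ι] :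
    ((ι → A) ≃ₐ[R] (ι → A)) ≃* (ι → (A ≃ₐ[R] A)) ⋊[wreathAction ι (A ≃ₐ[R] A)] Equiv.Perm ι :=
  (MulEquiv.ofBijective _ ⟨wreathToAlgEquivPi_injective, wreathToAlgEquivPi_surjective⟩).symm

section TensorProduct

variable (F K Ω : Type*) [Field F] [Field K] [Field Ω] [Algebra F K] [Algebra F Ω]

noncomputable def tensorToPi : Ω ⊗[F] K →ₐ[Ω] ((K →ₐ[F] Ω) → Ω) :=
  Algebra.TensorProduct.lift (Algebra.ofId Ω _) (AlgHom.pi fun τ => τ) fun _ _ => .all _ _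

@[simp]
theorem tensorToPi_tmul (y : Ω) (x : K) (τ : K →ₐ[F] Ω) : tensorToPi F K Ω (y ⊗ₜ x) τ = y * τ x :=
  rfl

variable [FiniteDimensional F K]

theorem tensorToPi_surjective : Surjective (tensorToPi F K Ω) := by
  have hspan : Submodule.span Ω (Set.range fun x : K => fun τ : K →ₐ[F] Ω => τ x) = ⊤ :=
    span_flip_eq_top_iff_linearIndependent.mpr <|
      (linearIndependent_monoidHom K Ω).comp _ AlgHom.coe_monoidHom_injective
  refine LinearMap.range_eq_top.mp (eq_top_iff.mpr (hspan ▸ Submodule.span_le.mpr ?_))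
  rintro _ ⟨x, rfl⟩
  exact ⟨1 ⊗ₜ x, funext fun τ => by simp⟩

theorem tensorToPi_bijective [Algebra.IsSeparable F K] [IsAlgClosed Ω] :
    Bijective (tensorToPi F K Ω) := by
  have hrank : Module.finrank Ω (Ω ⊗[F] K) = Module.finrank Ω ((K →ₐ[F] Ω) → Ω) := by
    rw [Module.finrank_baseChange, Module.finrank_pi, AlgHom.card]
  exact ⟨(LinearMap.injective_iff_surjective_of_finrank_eq_finrank hrank).mpr
    (tensorToPi_surjective F K Ω), tensorToPi_surjective F K Ω⟩

end TensorProduct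

theorem AlgHom.exists_algEquiv_apply_algebraMap_eq {F K Ω : Type*} [Field F] [Field K] [Field Ω]
    [Algebra F K] [Algebra F Ω] [Algebra K Ω] [IsScalarTower F K Ω] [Normal F Ω]
    (τ : K →ₐ[F] Ω) : ∃ σ : Ω ≃ₐ[F] Ω, ∀ x, σ (algebraMap K Ω x) = τ x :=
  ⟨.ofBijective (τ.liftNormal Ω) (AlgHom.normal_bijective F Ω Ω _), τ.liftNormal_commutes Ω⟩

theorem nonempty_tensorProduct_algEquiv_pi (F K Ω : Type*) [Field F] [Field K] [Field Ω]
    [Algebra F K] [Algebra F Ω] [Algebra K Ω] [IsScalarTower F K Ω] [FiniteDimensional F K]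
    [Algebra.IsSeparable F K] [IsAlgClosed Ω] [Normal F Ω] :
    Nonempty (K ⊗[F] Ω ≃ₐ[K] ((K →ₐ[F] Ω) → Ω)) := by
  choose σ hσ using fun τ : K →ₐ[F] Ω => τ.exists_algEquiv_apply_algebraMap_eq
  let e : K ⊗[F] Ω →ₐ[K] ((K →ₐ[F] Ω) → Ω) := Algebra.TensorProduct.lift (Algebra.ofId K _)
    (AlgHom.pi fun τ => ((σ τ).symm : Ω →ₐ[F] Ω)) fun _ _ => .all _ _
  have he : e.restrictScalars F = ((AlgEquiv.piCongrRight fun τ => (σ τ).symm).toAlgHom.comp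
      ((tensorToPi F K Ω).restrictScalars F)).comp (Algebra.TensorProduct.comm F K Ω).toAlgHom :=
    Algebra.TensorProduct.ext' fun x y => funext fun τ => by
      simp [e, ← hσ τ x, mul_comm]
  have hbij : Bijective e := by
    change Bijective (e.restrictScalars F)
    rw [he]
    exact (AlgEquiv.piCongrRight fun τ => (σ τ).symm).bijective.comp
      ((tensorToPi_bijective F K Ω).comp (Algebra.TensorProduct.comm F K Ω).bijective)
  exact ⟨.ofBijective e hbij⟩

/-- Let `K` be a finite extension of `ℚ_p`, `Ω` an algebraic closure of
`ℚ_p`, `P` the set of `ℚ_p`-algebra embeddings `K → Ω`, and fix `ι ∈ P` giving `Ω` its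
`K`-algebra structure.  Then the plectic Galois group `Aut_{K-alg}(K ⊗_{ℚ_p} Ω)` is isomorphic
to the wreath product `(P → Gal(Ω/K)) ⋊ Perm(P)`. -/
theorem statement0 (p : ℕ) [Fact p.Prime] (K : Type*) [Field K] [Algebra ℚ_[p] K]
    [FiniteDimensional ℚ_[p] K]
    (ι : K →ₐ[ℚ_[p]] AlgebraicClosure ℚ_[p]) :
    letI : Algebra K (AlgebraicClosure ℚ_[p]) := ι.toRingHom.toAlgebra
    Nonempty
      (((K ⊗[ℚ_[p]] AlgebraicClosure ℚ_[p]) ≃ₐ[K] (K ⊗[ℚ_[p]] AlgebraicClosure ℚ_[p])) ≃*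
        ((K →ₐ[ℚ_[p]] AlgebraicClosure ℚ_[p]) →
            (AlgebraicClosure ℚ_[p] ≃ₐ[K] AlgebraicClosure ℚ_[p])) ⋊[wreathAction
              (K →ₐ[ℚ_[p]] AlgebraicClosure ℚ_[p])
              (AlgebraicClosure ℚ_[p] ≃ₐ[K] AlgebraicClosure ℚ_[p])]
          Equiv.Perm (K →ₐ[ℚ_[p]] AlgebraicClosure ℚ_[p])) := by
  let _ : Algebra K (AlgebraicClosure ℚ_[p]) := ι.toRingHom.toAlgebra
  have : IsScalarTower ℚ_[p] K (AlgebraicClosure ℚ_[p]) :=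
    .of_algebraMap_eq fun x => (ι.commutes x).symm
  obtain ⟨e⟩ := nonempty_tensorProduct_algEquiv_pi ℚ_[p] K (AlgebraicClosure ℚ_[p])
  exact ⟨(AlgEquiv.autCongr e).trans (AlgEquiv.piAutMulEquivWreath _ _ _)⟩
end

section
/- With the notation below, there exists an injective k-algebra homomorphism h from the multivariate power series ring k[[X_α : α ∈ Δ]] to Ẽ_Δ⁺ sending X_α to ϖ_α for every α ∈ Δ, with the following property: for every finite family d_1, …, d_m ∈ ℕ^Δ of multi-exponents, the preimage under h of the ideal of Ẽ_Δ⁺ generated by the monomials ϖ^{d_i} := ∏_{α∈Δ} ϖ_α^{d_i(α)} (1 ≤ i ≤ m) is exactly the ideal of k[[X_α : α ∈ Δ]] generated by the monomials X^{d_i} := ∏_{α∈Δ} X_α^{d_i(α)} (1 ≤ i ≤ m). -/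
section Setup

variable (p : ℕ) [Fact p.Prime]
variable (k : Type) [Field k] [Fintype k] [CharP k p]

instance : CharP (PowerSeries k) p :=
  charP_of_injective_ringHom (PowerSeries.C (R := k)).injective p

/-- `A`: the perfect closure of the power series ring `k[[X]]` with respect to `p`,
i.e. the ring of integers of the perfectoid field `k((X^{1/q^∞}))`. -/
abbrev PerfA := PerfectClosure (PowerSeries k) p

noncomputable instance : Algebra k (PerfA p k) :=
  ((PerfectClosure.of (PowerSeries k) p).comp (PowerSeries.C (R := k))).toAlgebra

variable (Δ : Type) [Fintype Δ] [DecidableEq Δ]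

/-- `B = ⨂_{α ∈ Δ, k} A`: the tensor product over `k` of copies of `A` indexed by `Δ`. -/
abbrev BRing := PiTensorProduct k (fun _ : Δ => PerfA p k)

/-- `ϖ_α ∈ B`: the image of `X` under the `α`-th canonical inclusion `A → B`
(the pure tensor with `X` in slot `α` and `1` elsewhere). -/
noncomputable def piW (α : Δ) : BRing p k Δ :=
  PiTensorProduct.tprod k
    (fun β => if β = α then PerfectClosure.of (PowerSeries k) p PowerSeries.X else 1)

/-- The ideal `J ⊆ B` generated by the `ϖ_α`, `α ∈ Δ`. -/
noncomputable def JIdeal : Ideal (BRing p k Δ) := Ideal.span (Set.range (piW p k Δ))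

/-- `Ẽ_Δ⁺`: the `J`-adic completion of `B`. -/
abbrev ETildePlus := AdicCompletion (JIdeal p k Δ) (BRing p k Δ)

end Setup


set_option linter.unusedSectionVars false

section Aux
variable (p : ℕ) [Fact p.Prime]
variable (k : Type) [Field k] [Fintype k] [CharP k p]

namespace St3Aux

/-- Inverse Frobenius iterated `n` times, as a ring hom. -/
noncomputable def fIn : ℕ → (k →+* k)
  | 0 => RingHom.id k
  | n + 1 => ((frobeniusEquiv k p).symm : k →+* k).comp (fIn n)

lemma fIn_pow_p (n : ℕ) (x : k) : fIn p k (n + 1) (x ^ p) = fIn p k n x := by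
  have : fIn p k (n+1) (x ^ p) = (frobeniusEquiv k p).symm (fIn p k n (x ^ p)) := rfl
  rw [this, map_pow]
  have : (fIn p k n x) ^ p = frobeniusEquiv k p (fIn p k n x) := rfl
  rw [this, RingEquiv.symm_apply_apply]

lemma fIn_pow_pn (n : ℕ) (a : k) : fIn p k n (a ^ p ^ n) = a := by
  induction n generalizing a with
  | zero => simp [fIn]
  | succ n ih =>
    have h1 : a ^ p ^ (n+1) = (a ^ p ^ n) ^ p := by rw [← pow_mul, pow_succ]
    rw [h1]
    rw [fIn_pow_p]
    exact ih a

open Classical in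
/-- Coefficient of a power series at a rational index (zero if not a natural number). -/
noncomputable def coeffQ (r : ℚ) (g : PowerSeries k) : k :=
  if h : ∃ m : ℕ, (m : ℚ) = r then PowerSeries.coeff (R := k) h.choose g else 0

lemma coeffQ_natCast (m : ℕ) (g : PowerSeries k) :
    coeffQ k (m : ℚ) g = PowerSeries.coeff (R := k) m g := by
  unfold coeffQ
  rw [dif_pos ⟨m, rfl⟩]
  have h : (⟨m, rfl⟩ : ∃ m' : ℕ, ((m' : ℚ) = (m : ℚ))).choose = m := by
    exact_mod_cast (⟨m, rfl⟩ : ∃ m' : ℕ, ((m' : ℚ) = (m : ℚ))).choose_spec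
  rw [h]

lemma coeffQ_of_not_exists {r : ℚ} (h : ¬ ∃ m : ℕ, (m : ℚ) = r) (g : PowerSeries k) :
    coeffQ k r g = 0 := by unfold coeffQ; rw [dif_neg h]

lemma coeffQ_of_neg {r : ℚ} (h : r < 0) (g : PowerSeries k) : coeffQ k r g = 0 := by
  apply coeffQ_of_not_exists
  rintro ⟨m, rfl⟩
  have : (0:ℚ) ≤ m := by positivity
  linarith

lemma coeffQ_add (r : ℚ) (g g' : PowerSeries k) :
    coeffQ k r (g + g') = coeffQ k r g + coeffQ k r g' := by
  unfold coeffQ; split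
  · simp
  · simp

lemma coeffQ_C_mul (r : ℚ) (a : k) (g : PowerSeries k) :
    coeffQ k r (PowerSeries.C (R := k) a * g) = a * coeffQ k r g := by
  unfold coeffQ; split
  · simp
  · simp

lemma coeffQ_X_pow_mul (r : ℚ) (c : ℕ) (g : PowerSeries k) :
    coeffQ k r (PowerSeries.X ^ c * g) = coeffQ k (r - c) g := by
  by_cases h : ∃ m : ℕ, (m : ℚ) = r
  · obtain ⟨m, rfl⟩ := h
    rw [coeffQ_natCast, PowerSeries.coeff_X_pow_mul']
    by_cases hcm : c ≤ m
    · rw [if_pos hcm]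
      have : ((m : ℚ) - c) = ((m - c : ℕ) : ℚ) := by
        push_cast [hcm]; ring
      rw [this, coeffQ_natCast]
    · rw [if_neg hcm]
      rw [coeffQ_of_neg]
      have : (m : ℚ) < c := by exact_mod_cast Nat.lt_of_not_le hcm
      linarith
  · rw [coeffQ_of_not_exists k h, coeffQ_of_not_exists]
    rintro ⟨m', hm'⟩
    exact h ⟨m' + c, by push_cast; rw [hm']; ring⟩

set_option linter.unusedSectionVars false

/-- Coefficients of a product vanish below if one factor vanishes below. -/
lemma coeff_eq_of_agree (m : ℕ) (f₁ f₂ : PowerSeries k) (hag : ∀ i ≤ m, PowerSeries.coeff (R := k) i f₁ = PowerSeries.coeff (R := k) i f₂) :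
    ∀ j, ∀ i ≤ m, PowerSeries.coeff (R := k) i (f₁ ^ j) = PowerSeries.coeff (R := k) i (f₂ ^ j) := by
  intro j
  induction j with
  | zero => intro i _; rfl
  | succ j ih =>
    intro i hi
    rw [pow_succ, pow_succ, PowerSeries.coeff_mul, PowerSeries.coeff_mul]
    apply Finset.sum_congr rfl
    intro q hq
    have hq' := Finset.HasAntidiagonal.mem_antidiagonal.mp hq
    have h1 : q.1 ≤ m := le_trans (le_trans (Nat.le_add_right _ _) hq'.le) hi
    have h2 : q.2 ≤ m := le_trans (le_trans (Nat.le_add_left _ _) hq'.le) hi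
    rw [ih q.1 h1, hag q.2 h2]

lemma coeff_pow_char (g : PowerSeries k) (m : ℕ) :
    PowerSeries.coeff (R := k) m (g ^ p) = if p ∣ m then (PowerSeries.coeff (R := k) (m / p) g) ^ p else 0 := by
  have hp : 0 < p := (Fact.out : p.Prime).pos
  set t : Polynomial k := PowerSeries.trunc (m + 1) g with ht
  have hag : ∀ i ≤ m, PowerSeries.coeff (R := k) i ((t : PowerSeries k)) = PowerSeries.coeff (R := k) i g := by
    intro i hi
    rw [Polynomial.coeff_coe, PowerSeries.coeff_trunc, if_pos (Nat.lt_succ_of_le hi)]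
  have key : PowerSeries.coeff (R := k) m (g ^ p) = PowerSeries.coeff (R := k) m ((t : PowerSeries k) ^ p) :=
    (coeff_eq_of_agree k m (t : PowerSeries k) g hag p m le_rfl).symm
  rw [key, ← Polynomial.coe_pow, Polynomial.coeff_coe]
  rw [← Polynomial.map_frobenius_expand (p := p) t, Polynomial.coeff_map, Polynomial.coeff_expand hp]
  split_ifs with h
  · rw [frobenius_def]
    rw [← Polynomial.coeff_coe, hag (m / p) (le_trans (Nat.div_le_self m p) le_rfl)]
  · exact map_zero _

/-- The value of the coefficient functional on a representative. -/
noncomputable def valA (e : ℚ) (n : ℕ) (g : PowerSeries k) : k :=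
  fIn p k n (coeffQ k (e * (p : ℚ) ^ n) g)

lemma valA_R (e : ℚ) (n : ℕ) (g : PowerSeries k) :
    valA p k e (n + 1) (g ^ p) = valA p k e n g := by
  have hp : 0 < p := (Fact.out : p.Prime).pos
  have hp' : (p : ℚ) ≠ 0 := by exact_mod_cast hp.ne'
  by_cases h : ∃ m : ℕ, (m : ℚ) = e * (p : ℚ) ^ n
  · obtain ⟨m, hm⟩ := h
    have hmp : ((m * p : ℕ) : ℚ) = e * (p : ℚ) ^ (n + 1) := by
      push_cast; linear_combination (p:ℚ) * hm
    unfold valA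
    rw [← hmp, coeffQ_natCast, ← hm, coeffQ_natCast]
    rw [coeff_pow_char p k g (m * p), if_pos ⟨m, by ring⟩, Nat.mul_div_cancel m hp]
    exact fIn_pow_p p k n _
  · unfold valA
    rw [coeffQ_of_not_exists k h, map_zero]
    by_cases h' : ∃ m' : ℕ, (m' : ℚ) = e * (p : ℚ) ^ (n + 1)
    · obtain ⟨m', hm'⟩ := h'
      rw [← hm', coeffQ_natCast]
      have hnd : ¬ p ∣ m' := by
        rintro ⟨j, rfl⟩
        apply h
        refine ⟨j, ?_⟩
        exact mul_left_cancel₀ hp' (by push_cast at hm' ⊢; linear_combination hm')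
      rw [coeff_pow_char p k g m', if_neg hnd, map_zero]
    · rw [coeffQ_of_not_exists k h', map_zero]

lemma valA_add (e : ℚ) (n : ℕ) (g g' : PowerSeries k) :
    valA p k e n (g + g') = valA p k e n g + valA p k e n g' := by
  unfold valA; rw [coeffQ_add, map_add]

lemma valA_shift (e : ℚ) (m j : ℕ) (g : PowerSeries k) :
    valA p k e (m + j) (g ^ p ^ j) = valA p k e m g := by
  induction j with
  | zero => simp
  | succ j ih =>
    have : g ^ p ^ (j + 1) = (g ^ p ^ j) ^ p := by rw [← pow_mul, pow_succ]
    rw [this, show m + (j+1) = (m + j) + 1 from rfl, valA_R]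
    exact ih

/-- The coefficient functional on the perfect closure, as a bare function. -/
noncomputable def cAfun (e : ℚ) (x : PerfA p k) : k :=
  PerfectClosure.liftOn x (fun nx => valA p k e nx.1 nx.2) (by
    rintro x y ⟨n, g⟩
    exact (by rw [frobenius_def]; exact (valA_R p k e n g).symm :
      valA p k e n g = valA p k e (n + 1) (frobenius (PowerSeries k) p g)))

lemma cA_mk (e : ℚ) (nx : ℕ × PowerSeries k) :
    cAfun p k e (PerfectClosure.mk _ p nx) = valA p k e nx.1 nx.2 :=
  PerfectClosure.liftOn_mk _ _ _

lemma cA_add (e : ℚ) (x y : PerfA p k) :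
    cAfun p k e (x + y) = cAfun p k e x + cAfun p k e y := by
  induction x using PerfectClosure.induction_on with | h x =>
  induction y using PerfectClosure.induction_on with | h y =>
  obtain ⟨m, a⟩ := x; obtain ⟨n, b⟩ := y
  rw [PerfectClosure.mk_add_mk, cA_mk, cA_mk, cA_mk]
  simp only [iterate_frobenius]
  rw [valA_add]
  congr 1
  · exact valA_shift p k e m n a
  · rw [show m + n = n + m from add_comm m n]
    exact valA_shift p k e n m b

lemma cA_smul (e : ℚ) (a : k) (x : PerfA p k) :
    cAfun p k e (a • x) = a * cAfun p k e x := by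
  induction x using PerfectClosure.induction_on with | h x =>
  obtain ⟨n, g⟩ := x
  have hsm : a • PerfectClosure.mk _ p (n, g) =
      PerfectClosure.of (PowerSeries k) p (PowerSeries.C (R := k) a) * PerfectClosure.mk _ p (n, g) := by
    rw [Algebra.smul_def]; rfl
  rw [hsm, PerfectClosure.of_apply, PerfectClosure.mk_mul_mk, cA_mk, cA_mk]
  simp only [iterate_frobenius, Function.iterate_zero, id_eq, zero_add]
  rw [pow_zero, pow_one, ← map_pow]
  unfold valA
  rw [coeffQ_C_mul, map_mul, fIn_pow_pn]

/-- The coefficient functional on the perfect closure, as a `k`-linear map. -/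
noncomputable def cA (e : ℚ) : PerfA p k →ₗ[k] k where
  toFun := cAfun p k e
  map_add' := cA_add p k e
  map_smul' := cA_smul p k e

lemma cA_one (e : ℚ) : cA p k e 1 = if e = 0 then 1 else 0 := by
  show cAfun p k e 1 = _
  rw [PerfectClosure.one_def, cA_mk]
  show fIn p k 0 (coeffQ k (e * (p:ℚ) ^ 0) 1) = _
  rw [pow_zero, mul_one]
  show coeffQ k e 1 = _
  by_cases he : e = 0
  · subst he
    rw [show (0:ℚ) = ((0:ℕ):ℚ) by norm_num, coeffQ_natCast]
    simp
  · rw [if_neg he]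
    by_cases h : ∃ m : ℕ, (m : ℚ) = e
    · obtain ⟨m, rfl⟩ := h
      have hm : m ≠ 0 := by rintro rfl; exact he (by norm_num)
      rw [coeffQ_natCast]
      simp [PowerSeries.coeff_one, hm]
    · exact coeffQ_of_not_exists k h 1

lemma cA_X_mul (e : ℚ) (x : PerfA p k) :
    cA p k e (PerfectClosure.of (PowerSeries k) p PowerSeries.X * x) = cA p k (e - 1) x := by
  show cAfun p k e _ = cAfun p k (e - 1) x
  induction x using PerfectClosure.induction_on with | h x =>
  obtain ⟨n, g⟩ := x
  rw [PerfectClosure.of_apply, PerfectClosure.mk_mul_mk, cA_mk, cA_mk]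
  simp only [iterate_frobenius, Function.iterate_zero, id_eq, zero_add]
  rw [pow_zero, pow_one]
  show fIn p k n (coeffQ k (e * (p:ℚ) ^ n) (PowerSeries.X ^ p ^ n * g)) = _
  rw [coeffQ_X_pow_mul]
  congr 2
  push_cast
  ring

lemma cA_neg_eq_zero {e : ℚ} (he : e < 0) (x : PerfA p k) : cA p k e x = 0 := by
  show cAfun p k e x = 0
  induction x using PerfectClosure.induction_on with | h x =>
  obtain ⟨n, g⟩ := x
  rw [cA_mk]
  unfold valA
  rw [coeffQ_of_neg, map_zero]
  have hp0 : (0:ℚ) < (p:ℚ) := by exact_mod_cast (Fact.out : p.Prime).pos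
  have : (0:ℚ) < (p:ℚ) ^ n := by positivity
  exact mul_neg_of_neg_of_pos he this

section PartB
variable (Δ : Type) [Fintype Δ] [DecidableEq Δ]

/-- The product-of-coefficients functional on the tensor product. -/
noncomputable def lamB (E : Δ → ℚ) : BRing p k Δ →ₗ[k] k :=
  PiTensorProduct.lift ((MultilinearMap.mkPiAlgebra k Δ k).compLinearMap (fun α => cA p k (E α)))

lemma lamB_tprod (E : Δ → ℚ) (x : Δ → PerfA p k) :
    lamB p k Δ E (PiTensorProduct.tprod k x) = ∏ α, cA p k (E α) (x α) := by
  simp [lamB]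

lemma lamB_one (E : Δ → ℚ) :
    lamB p k Δ E 1 = if ∀ α, E α = 0 then 1 else 0 := by
  rw [PiTensorProduct.one_def, lamB_tprod]
  by_cases h : ∀ α, E α = 0
  · rw [if_pos h]
    refine Finset.prod_eq_one fun α _ => ?_
    rw [Pi.one_apply, cA_one, if_pos (h α)]
  · rw [if_neg h]
    push_neg at h
    obtain ⟨α, hα⟩ := h
    refine Finset.prod_eq_zero (Finset.mem_univ α) ?_
    rw [Pi.one_apply, cA_one, if_neg hα]

lemma lamB_neg_eq_zero {E : Δ → ℚ} (h : ∃ α, E α < 0) (b : BRing p k Δ) :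
    lamB p k Δ E b = 0 := by
  obtain ⟨α, hα⟩ := h
  induction b using PiTensorProduct.induction_on with
  | smul_tprod r x =>
    rw [map_smul, lamB_tprod]
    rw [Finset.prod_eq_zero (Finset.mem_univ α) (cA_neg_eq_zero p k hα (x α))]
    simp
  | add x y hx hy => rw [map_add, hx, hy, add_zero]

lemma lamB_piW_mul (E : Δ → ℚ) (α : Δ) (b : BRing p k Δ) :
    lamB p k Δ E (piW p k Δ α * b) =
      lamB p k Δ (fun β => E β - if β = α then 1 else 0) b := by
  induction b using PiTensorProduct.induction_on with
  | smul_tprod r x =>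
    rw [mul_smul_comm, map_smul, map_smul, lamB_tprod]
    rw [show piW p k Δ α * PiTensorProduct.tprod k x = PiTensorProduct.tprod k
      ((fun β => if β = α then PerfectClosure.of (PowerSeries k) p PowerSeries.X else 1) * x) from
      PiTensorProduct.tprod_mul_tprod _ _]
    rw [lamB_tprod]
    congr 1
    refine Finset.prod_congr rfl fun β _ => ?_
    rw [Pi.mul_apply]
    by_cases hβ : β = α
    · rw [if_pos hβ, if_pos hβ, cA_X_mul]
    · rw [if_neg hβ, if_neg hβ, one_mul, sub_zero]
  | add x y hx hy => rw [mul_add, map_add, map_add, hx, hy]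

lemma lamB_piW_pow_mul (E : Δ → ℚ) (α : Δ) (j : ℕ) (b : BRing p k Δ) :
    lamB p k Δ E (piW p k Δ α ^ j * b) =
      lamB p k Δ (fun β => E β - if β = α then (j : ℚ) else 0) b := by
  induction j generalizing E with
  | zero => simp
  | succ j ih =>
    rw [pow_succ', mul_assoc, lamB_piW_mul, ih]
    have hE : (fun β => (E β - if β = α then 1 else 0) - if β = α then (j:ℚ) else 0)
        = (fun β => E β - if β = α then ((j+1 : ℕ) : ℚ) else 0) := by
      funext β
      by_cases hβ : β = α <;> simp [hβ] <;> push_cast <;> ring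
    rw [hE]

/-- Monomial in the `ϖ_α` with plain-function exponents. -/
noncomputable def wpow (e : Δ → ℕ) : BRing p k Δ := ∏ α, piW p k Δ α ^ e α

lemma lamB_wpow_mul_aux (e : Δ → ℕ) (s : Finset Δ) :
    ∀ (E : Δ → ℚ) (b : BRing p k Δ),
    lamB p k Δ E ((∏ α ∈ s, piW p k Δ α ^ e α) * b) =
      lamB p k Δ (fun β => E β - if β ∈ s then (e β : ℚ) else 0) b := by
  induction s using Finset.induction_on with
  | empty => intro E b; simp
  | insert α s hα ih =>
    intro E b
    rw [Finset.prod_insert hα, mul_assoc, lamB_piW_pow_mul, ih]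
    have hE : (fun β => (E β - if β = α then ((e α : ℕ):ℚ) else 0) - if β ∈ s then (e β : ℚ) else 0)
        = (fun β => E β - if β ∈ insert α s then (e β : ℚ) else 0) := by
      funext β
      by_cases h1 : β = α
      · rw [if_pos h1, if_neg (fun hs => hα (h1 ▸ hs)), sub_zero,
            if_pos (Finset.mem_insert.mpr (Or.inl h1)), h1]
      · rw [if_neg h1, sub_zero]
        by_cases h2 : β ∈ s
        · rw [if_pos h2, if_pos (Finset.mem_insert_of_mem h2)]
        · rw [if_neg h2, if_neg (by simp [h1, h2])]
    rw [hE]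

lemma wpow_eq_prod (e : Δ → ℕ) : wpow p k Δ e = ∏ α, piW p k Δ α ^ e α := rfl

lemma lamB_wpow_mul (e : Δ → ℕ) (E : Δ → ℚ) (b : BRing p k Δ) :
    lamB p k Δ E (wpow p k Δ e * b) = lamB p k Δ (fun β => E β - e β) b := by
  rw [wpow, lamB_wpow_mul_aux]
  simp

lemma lamB_wpow (d e : Δ → ℕ) :
    lamB p k Δ (fun α => (d α : ℚ)) (wpow p k Δ e) = if d = e then 1 else 0 := by
  rw [← mul_one (wpow p k Δ e), lamB_wpow_mul, lamB_one]
  by_cases h : d = e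
  · subst h; simp
  · rw [if_neg h, if_neg]
    intro hall
    apply h
    funext α
    have := hall α
    rw [sub_eq_zero] at this
    exact_mod_cast this

end PartB

section PartC
variable (Δ : Type) [Fintype Δ] [DecidableEq Δ]

lemma smul_mem_ideal (I : Ideal (BRing p k Δ)) (c : k) {x : BRing p k Δ} (hx : x ∈ I) :
    c • x ∈ I := by
  rw [Algebra.smul_def]; exact I.mul_mem_left _ hx

lemma piW_mem_J (α : Δ) : piW p k Δ α ∈ JIdeal p k Δ := Ideal.subset_span ⟨α, rfl⟩

lemma wpow_mem_aux (e : Δ → ℕ) (s : Finset Δ) :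
    (∏ α ∈ s, piW p k Δ α ^ e α) ∈ (JIdeal p k Δ) ^ (∑ α ∈ s, e α) := by
  induction s using Finset.induction_on with
  | empty => simp [Ideal.one_eq_top]
  | insert α s hα ih =>
    rw [Finset.prod_insert hα, Finset.sum_insert hα, pow_add]
    exact Ideal.mul_mem_mul (Ideal.pow_mem_pow (piW_mem_J p k Δ α) _) ih

lemma wpow_mem {e : Δ → ℕ} {n : ℕ} (hn : ∃ α, n ≤ e α) :
    wpow p k Δ e ∈ (JIdeal p k Δ) ^ n := by
  obtain ⟨α, hα⟩ := hn
  have h1 : n ≤ ∑ β, e β :=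
    le_trans hα (Finset.single_le_sum (fun _ _ => Nat.zero_le _) (Finset.mem_univ α))
  exact Ideal.pow_le_pow_right h1 (wpow_mem_aux p k Δ e Finset.univ)

lemma lamB_Jpow : ∀ n : ℕ, ∀ b ∈ (JIdeal p k Δ) ^ n, ∀ E : Δ → ℚ,
    (∑ α, E α) < n → lamB p k Δ E b = 0 := by
  intro n
  induction n with
  | zero =>
    intro b _ E hE
    refine lamB_neg_eq_zero p k Δ ?_ b
    by_contra hc
    push_neg at hc
    have : (0:ℚ) ≤ ∑ α, E α := Finset.sum_nonneg fun α _ => hc α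
    simp only [Nat.cast_zero] at hE
    linarith
  | succ n ih =>
    intro b hb E hE
    rw [pow_succ'] at hb
    refine Submodule.mul_induction_on hb ?_ (fun x y hx hy => by rw [map_add, hx, hy, add_zero])
    intro m hm
    refine Submodule.span_induction (p := fun m _ => ∀ c ∈ (JIdeal p k Δ) ^ n, lamB p k Δ E (m * c) = 0)
      ?_ ?_ ?_ ?_ hm
    · rintro _ ⟨α, rfl⟩ c hc
      rw [lamB_piW_mul]
      refine ih c hc _ ?_
      have hsum : ∑ β, (E β - if β = α then (1:ℚ) else 0) = (∑ β, E β) - 1 := by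
        rw [Finset.sum_sub_distrib]
        congr 1
        simp
      rw [hsum]
      push_cast at hE ⊢
      linarith
    · intro c _; rw [zero_mul, map_zero]
    · intro x y _ _ hx hy c hc
      rw [add_mul, map_add, hx c hc, hy c hc, add_zero]
    · intro a x _ hx c hc
      rw [smul_eq_mul, show a * x * c = x * (a * c) by ring]
      exact hx (a * c) (Ideal.mul_mem_left _ a hc)

/-- The "constant `n`" finitely supported function. -/
noncomputable def Nn (n : ℕ) : Δ →₀ ℕ := Finsupp.equivFunOnFinite.symm (fun _ => n)

lemma Nn_apply (n : ℕ) (α : Δ) : Nn Δ n α = n := rfl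

lemma le_Nn_iff {d : Δ →₀ ℕ} {n : ℕ} : d ≤ Nn Δ n ↔ ∀ α, d α ≤ n := by
  rw [Finsupp.le_def]
  exact ⟨fun h α => h α, fun h α => h α⟩

/-- Truncated evaluation of a multivariate power series at the `ϖ_α`. -/
noncomputable def S (n : ℕ) (f : MvPowerSeries Δ k) : BRing p k Δ :=
  ∑ d ∈ Finset.Iic (Nn Δ n), MvPowerSeries.coeff (R := k) d f • wpow p k Δ ⇑d

lemma S_sub_S_mem {m n : ℕ} (hmn : m ≤ n) (f : MvPowerSeries Δ k) :
    S p k Δ n f - S p k Δ m f ∈ (JIdeal p k Δ) ^ m := by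
  have hsub : Finset.Iic (Nn Δ m) ⊆ Finset.Iic (Nn Δ n) :=
    Finset.Iic_subset_Iic.mpr (Finsupp.le_def.mpr fun α => hmn)
  rw [show S p k Δ n f - S p k Δ m f
      = ∑ d ∈ Finset.Iic (Nn Δ n) \ Finset.Iic (Nn Δ m),
          MvPowerSeries.coeff (R := k) d f • wpow p k Δ ⇑d from (Finset.sum_sdiff_eq_sub hsub).symm]
  refine Submodule.sum_mem _ fun d hd => ?_
  obtain ⟨-, hd2⟩ := Finset.mem_sdiff.mp hd
  rw [Finset.mem_Iic] at hd2
  have : ∃ α, m ≤ d α := by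
    by_contra hc
    push_neg at hc
    exact hd2 ((le_Nn_iff Δ).mpr fun α => le_of_lt (hc α))
  exact smul_mem_ideal p k Δ _ _ (wpow_mem p k Δ this)

end PartC

section PartD
variable (Δ : Type) [Fintype Δ] [DecidableEq Δ]

lemma wpow_mul_wpow (a b : Δ → ℕ) :
    wpow p k Δ a * wpow p k Δ b = wpow p k Δ (a + b) := by
  rw [wpow, wpow, wpow, ← Finset.prod_mul_distrib]
  exact Finset.prod_congr rfl fun α _ => by rw [Pi.add_apply, pow_add]

lemma wpow_zero : wpow p k Δ 0 = 1 := by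
  simp [wpow]

lemma wpow_single (α : Δ) : wpow p k Δ ⇑(Finsupp.single α 1) = piW p k Δ α := by
  rw [wpow, Finset.prod_eq_single α]
  · rw [Finsupp.single_eq_same, pow_one]
  · intro β _ hβ
    rw [Finsupp.single_eq_of_ne hβ, pow_zero]
  · intro h; exact absurd (Finset.mem_univ α) h

lemma S_add (n : ℕ) (f g : MvPowerSeries Δ k) :
    S p k Δ n (f + g) = S p k Δ n f + S p k Δ n g := by
  rw [S, S, S, ← Finset.sum_add_distrib]
  exact Finset.sum_congr rfl fun d _ => by rw [map_add, add_smul]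

lemma S_zero (n : ℕ) : S p k Δ n 0 = 0 := by
  rw [S]
  exact Finset.sum_eq_zero fun d _ => by rw [map_zero, zero_smul]

lemma zero_mem_Iic (n : ℕ) : (0 : Δ →₀ ℕ) ∈ Finset.Iic (Nn Δ n) :=
  Finset.mem_Iic.mpr zero_le

lemma S_C (n : ℕ) (a : k) : S p k Δ n (MvPowerSeries.C (σ := Δ) (R := k) a) = a • 1 := by
  rw [S, Finset.sum_eq_single (0 : Δ →₀ ℕ)]
  · rw [MvPowerSeries.coeff_C, if_pos rfl, Finsupp.coe_zero, wpow_zero]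
  · intro d _ hd
    rw [MvPowerSeries.coeff_C, if_neg hd, zero_smul]
  · intro h; exact absurd (zero_mem_Iic Δ n) h

lemma S_one (n : ℕ) : S p k Δ n 1 = 1 := by
  have := S_C p k Δ n 1
  rwa [map_one, one_smul] at this

lemma S_X {n : ℕ} (hn : 1 ≤ n) (α : Δ) : S p k Δ n (MvPowerSeries.X α) = piW p k Δ α := by
  rw [S, Finset.sum_eq_single (Finsupp.single α 1)]
  · rw [MvPowerSeries.coeff_X, if_pos rfl, wpow_single, one_smul]
  · intro d _ hd
    rw [MvPowerSeries.coeff_X, if_neg hd, zero_smul]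
  · intro h
    refine absurd (Finset.mem_Iic.mpr ((le_Nn_iff Δ).mpr fun β => ?_)) h
    by_cases hβ : α = β
    · subst hβ; rw [Finsupp.single_eq_same]; exact hn
    · rw [Finsupp.single_eq_of_ne (Ne.symm hβ)]; exact Nat.zero_le _

lemma S_mul_sub_mem (n : ℕ) (f g : MvPowerSeries Δ k) :
    S p k Δ n f * S p k Δ n g - S p k Δ n (f * g) ∈ (JIdeal p k Δ) ^ n := by
  classical
  have h1 : S p k Δ n f * S p k Δ n g
      = ∑ q ∈ Finset.Iic (Nn Δ n) ×ˢ Finset.Iic (Nn Δ n),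
          (MvPowerSeries.coeff (R := k) q.1 f * MvPowerSeries.coeff (R := k) q.2 g) •
            wpow p k Δ (⇑q.1 + ⇑q.2) := by
    rw [S, S, Finset.sum_mul_sum, Finset.sum_product]
    refine Finset.sum_congr rfl fun a _ => Finset.sum_congr rfl fun b _ => ?_
    rw [smul_mul_smul_comm, wpow_mul_wpow]
  have h2 : S p k Δ n (f * g)
      = ∑ q ∈ (Finset.Iic (Nn Δ n) ×ˢ Finset.Iic (Nn Δ n)).filter
            (fun q => q.1 + q.2 ≤ Nn Δ n),
          (MvPowerSeries.coeff (R := k) q.1 f * MvPowerSeries.coeff (R := k) q.2 g) •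
            wpow p k Δ (⇑q.1 + ⇑q.2) := by
    rw [S]
    have h3 : ∀ d ∈ Finset.Iic (Nn Δ n),
        MvPowerSeries.coeff (R := k) d (f * g) • wpow p k Δ ⇑d
          = ∑ q ∈ Finset.HasAntidiagonal.antidiagonal d,
              (MvPowerSeries.coeff (R := k) q.1 f * MvPowerSeries.coeff (R := k) q.2 g) • wpow p k Δ ⇑d := by
      intro d _
      rw [MvPowerSeries.coeff_mul, Finset.sum_smul]
    rw [Finset.sum_congr rfl h3, Finset.sum_sigma']
    refine Finset.sum_nbij' (fun x => x.2) (fun q => ⟨q.1 + q.2, q⟩) ?_ ?_ ?_ ?_ ?_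
    · rintro ⟨d, q⟩ hx
      obtain ⟨hd, hq⟩ := Finset.mem_sigma.mp hx
      rw [Finset.mem_Iic] at hd
      have hsum : q.1 + q.2 = d := Finset.HasAntidiagonal.mem_antidiagonal.mp hq
      refine Finset.mem_filter.mpr ⟨Finset.mem_product.mpr ⟨?_, ?_⟩, by rw [hsum]; exact hd⟩
      · refine Finset.mem_Iic.mpr (le_trans (Finsupp.le_def.mpr fun β => ?_) hd)
        rw [← hsum, Finsupp.add_apply]
        exact Nat.le_add_right _ _
      · refine Finset.mem_Iic.mpr (le_trans (Finsupp.le_def.mpr fun β => ?_) hd)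
        rw [← hsum, Finsupp.add_apply]
        exact Nat.le_add_left _ _
    · intro q hq
      obtain ⟨hmem, hle⟩ := Finset.mem_filter.mp hq
      exact Finset.mem_sigma.mpr ⟨Finset.mem_Iic.mpr hle, Finset.HasAntidiagonal.mem_antidiagonal.mpr rfl⟩
    · rintro ⟨d, q⟩ hx
      obtain ⟨-, hq⟩ := Finset.mem_sigma.mp hx
      have hsum : q.1 + q.2 = d := Finset.HasAntidiagonal.mem_antidiagonal.mp hq
      simp only [Sigma.mk.inj_iff]
      exact ⟨hsum, HEq.symm (heq_of_eq_of_heq rfl HEq.rfl)⟩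
    · intro q _; rfl
    · rintro ⟨d, q⟩ hx
      obtain ⟨-, hq⟩ := Finset.mem_sigma.mp hx
      have hsum : q.1 + q.2 = d := Finset.HasAntidiagonal.mem_antidiagonal.mp hq
      rw [← hsum]
      rfl
  rw [h1, h2, ← Finset.sum_filter_add_sum_filter_not
    (Finset.Iic (Nn Δ n) ×ˢ Finset.Iic (Nn Δ n)) (fun q => q.1 + q.2 ≤ Nn Δ n), add_sub_cancel_left]
  refine Submodule.sum_mem _ fun q hq => ?_
  obtain ⟨-, hnot⟩ := Finset.mem_filter.mp hq
  have : ∃ α, n ≤ q.1 α + q.2 α := by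
    by_contra hc
    push_neg at hc
    refine hnot ((le_Nn_iff Δ).mpr fun α => ?_)
    rw [Finsupp.add_apply]
    exact Nat.le_of_lt_succ (Nat.lt_succ_of_lt (hc α))
  refine smul_mem_ideal p k Δ _ _ (wpow_mem p k Δ ?_)
  obtain ⟨α, hα⟩ := this
  exact ⟨α, by rw [Pi.add_apply]; exact hα⟩

end PartD

section PartE
variable (Δ : Type) [Fintype Δ] [DecidableEq Δ]

lemma smul_top_eq (m : ℕ) :
    ((JIdeal p k Δ) ^ m • ⊤ : Submodule (BRing p k Δ) (BRing p k Δ))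
      = ((JIdeal p k Δ) ^ m : Ideal (BRing p k Δ)) := by
  ext x; simp

/-- The underlying function of the homomorphism `h`. -/
noncomputable def hFun (f : MvPowerSeries Δ k) : ETildePlus p k Δ :=
  ⟨fun n => Submodule.Quotient.mk (S p k Δ n f), by
    intro m n hmn
    show (Submodule.Quotient.mk (S p k Δ n f) : BRing p k Δ ⧸ ((JIdeal p k Δ) ^ m • ⊤ : Submodule (BRing p k Δ) (BRing p k Δ))) = Submodule.Quotient.mk (S p k Δ m f)
    rw [Submodule.Quotient.eq, smul_top_eq]
    exact S_sub_S_mem p k Δ hmn f⟩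

lemma hFun_val (f : MvPowerSeries Δ k) (n : ℕ) :
    (hFun p k Δ f).val n = Submodule.Quotient.mk (S p k Δ n f) := rfl

lemma val_algebraMap (x : BRing p k Δ) (n : ℕ) :
    (algebraMap (BRing p k Δ) (ETildePlus p k Δ) x).val n = Submodule.Quotient.mk x := rfl

/-- The homomorphism `h`. -/
noncomputable def hHom : MvPowerSeries Δ k →+* ETildePlus p k Δ where
  toFun := hFun p k Δ
  map_one' := by
    refine Subtype.ext (funext fun n => ?_)
    show Submodule.Quotient.mk (S p k Δ n 1) = (1 : ETildePlus p k Δ).val n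
    rw [S_one, AdicCompletion.val_one]
    rw [Ideal.Quotient.mk_eq_mk, map_one]
  map_mul' f g := by
    refine Subtype.ext (funext fun n => ?_)
    show Submodule.Quotient.mk (S p k Δ n (f * g))
      = (hFun p k Δ f * hFun p k Δ g).val n
    rw [AdicCompletion.val_mul, hFun_val, hFun_val, Ideal.Quotient.mk_eq_mk,
      Ideal.Quotient.mk_eq_mk, Ideal.Quotient.mk_eq_mk, ← map_mul, Ideal.Quotient.eq,
      smul_top_eq]
    rw [show S p k Δ n (f * g) - S p k Δ n f * S p k Δ n g
      = -(S p k Δ n f * S p k Δ n g - S p k Δ n (f * g)) by ring]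
    exact Submodule.neg_mem _ (S_mul_sub_mem p k Δ n f g)
  map_zero' := by
    refine Subtype.ext (funext fun n => ?_)
    show Submodule.Quotient.mk (S p k Δ n 0) = (0 : ETildePlus p k Δ).val n
    rw [S_zero, Submodule.Quotient.mk_zero]
    rfl
  map_add' f g := by
    refine Subtype.ext (funext fun n => ?_)
    show Submodule.Quotient.mk (S p k Δ n (f + g)) = (hFun p k Δ f + hFun p k Δ g).val n
    rw [S_add]
    exact Submodule.Quotient.mk_add _

lemma hHom_C (a : k) :
    hHom p k Δ (MvPowerSeries.C (σ := Δ) (R := k) a)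
      = algebraMap (BRing p k Δ) (ETildePlus p k Δ) (a • 1) := by
  refine Subtype.ext (funext fun n => ?_)
  show Submodule.Quotient.mk (S p k Δ n (MvPowerSeries.C (σ := Δ) (R := k) a)) = _
  rw [S_C, val_algebraMap]

lemma hHom_X (α : Δ) :
    hHom p k Δ (MvPowerSeries.X α)
      = algebraMap (BRing p k Δ) (ETildePlus p k Δ) (piW p k Δ α) := by
  refine Subtype.ext (funext fun n => ?_)
  show Submodule.Quotient.mk (S p k Δ n (MvPowerSeries.X α))
    = Submodule.Quotient.mk (piW p k Δ α)
  rcases Nat.eq_zero_or_pos n with hn | hn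
  · subst hn
    rw [Submodule.Quotient.eq]
    rw [smul_top_eq, pow_zero, Ideal.one_eq_top]
    exact Submodule.mem_top
  · rw [S_X p k Δ hn α]
end PartE

section PartF
variable (Δ : Type) [Fintype Δ] [DecidableEq Δ]

lemma lamB_S {n : ℕ} (f : MvPowerSeries Δ k) {d₀ : Δ →₀ ℕ}
    (hd₀ : d₀ ∈ Finset.Iic (Nn Δ n)) :
    lamB p k Δ (fun α => (d₀ α : ℚ)) (S p k Δ n f) = MvPowerSeries.coeff (R := k) d₀ f := by
  rw [S, map_sum, Finset.sum_eq_single d₀]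
  · rw [map_smul, lamB_wpow, if_pos rfl]
    simp
  · intro d _ hd
    rw [map_smul, lamB_wpow, if_neg, smul_zero]
    intro hcoe
    exact hd (DFunLike.coe_injective hcoe).symm
  · intro h; exact absurd hd₀ h

lemma sum_d₀_mem (d₀ : Δ →₀ ℕ) : d₀ ∈ Finset.Iic (Nn Δ ((∑ α, d₀ α) + 1)) :=
  Finset.mem_Iic.mpr ((le_Nn_iff Δ).mpr fun α =>
    le_trans (Finset.single_le_sum (fun _ _ => Nat.zero_le _) (Finset.mem_univ α))
      (Nat.le_succ _))

lemma sum_d₀_lt (d₀ : Δ →₀ ℕ) :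
    (∑ α, ((d₀ α : ℚ))) < (((∑ α, d₀ α) + 1 : ℕ) : ℚ) := by
  push_cast
  norm_num

lemma hHom_injective : Function.Injective (hHom p k Δ) := by
  rw [injective_iff_map_eq_zero]
  intro f hf
  refine MvPowerSeries.ext fun d₀ => ?_
  rw [map_zero]
  set n : ℕ := (∑ α, d₀ α) + 1 with hn
  have hval : (Submodule.Quotient.mk (S p k Δ n f) :
      BRing p k Δ ⧸ ((JIdeal p k Δ) ^ n • ⊤ : Submodule (BRing p k Δ) (BRing p k Δ))) = 0 := by
    have h0 : (hHom p k Δ f).val n = (0 : ETildePlus p k Δ).val n := by rw [hf]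
    exact h0
  rw [Submodule.Quotient.mk_eq_zero, smul_top_eq] at hval
  rw [← lamB_S p k Δ f (sum_d₀_mem Δ d₀)]
  exact lamB_Jpow p k Δ n _ hval _ (sum_d₀_lt Δ d₀)

set_option synthInstance.maxHeartbeats 1000000 in
lemma coeff_eq_zero_of_mem_span {m : ℕ} (d : Fin m → Δ → ℕ) (f : MvPowerSeries Δ k)
    (hf : hHom p k Δ f ∈ Ideal.span (Set.range fun i =>
      algebraMap (BRing p k Δ) (ETildePlus p k Δ) (wpow p k Δ (d i))))
    (d₀ : Δ →₀ ℕ) (hd₀ : ∀ i, ¬ (∀ α, d i α ≤ d₀ α)) :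
    MvPowerSeries.coeff (R := k) d₀ f = 0 := by
  rw [Ideal.mem_span_range_iff_exists_fun] at hf
  obtain ⟨c, hc⟩ := hf
  set n : ℕ := (∑ α, d₀ α) + 1 with hn
  have hval : (Submodule.Quotient.mk (S p k Δ n f) :
      BRing p k Δ ⧸ ((JIdeal p k Δ) ^ n • ⊤ : Submodule (BRing p k Δ) (BRing p k Δ)))
      = ∑ i, (c i).val n * Submodule.Quotient.mk (wpow p k Δ (d i)) := by
    have h0 : (hHom p k Δ f).val n = (∑ i, c i *
        algebraMap (BRing p k Δ) (ETildePlus p k Δ) (wpow p k Δ (d i))).val n := by rw [hc]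
    rw [show (∑ i, c i * algebraMap (BRing p k Δ) (ETildePlus p k Δ) (wpow p k Δ (d i))).val n
        = AdicCompletion.eval (JIdeal p k Δ) (BRing p k Δ) n
            (∑ i, c i * algebraMap (BRing p k Δ) (ETildePlus p k Δ) (wpow p k Δ (d i))) from rfl,
      map_sum] at h0
    exact h0
  choose b hb using fun i =>
    Submodule.Quotient.mk_surjective
      ((JIdeal p k Δ) ^ n • ⊤ : Submodule (BRing p k Δ) (BRing p k Δ)) ((c i).val n)
  have hval2 : (Submodule.Quotient.mk (S p k Δ n f) :
      BRing p k Δ ⧸ ((JIdeal p k Δ) ^ n • ⊤ : Submodule (BRing p k Δ) (BRing p k Δ)))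
      = Submodule.Quotient.mk (∑ i, b i * wpow p k Δ (d i)) := by
    rw [hval]
    rw [Ideal.Quotient.mk_eq_mk, map_sum]
    refine Finset.sum_congr rfl fun i _ => ?_
    rw [← hb i, Ideal.Quotient.mk_eq_mk, Ideal.Quotient.mk_eq_mk, map_mul]
  rw [Submodule.Quotient.eq, smul_top_eq] at hval2
  have hlam := lamB_Jpow p k Δ n _ hval2 (fun α => (d₀ α : ℚ)) (sum_d₀_lt Δ d₀)
  rw [map_sub, map_sum, lamB_S p k Δ f (sum_d₀_mem Δ d₀), sub_eq_zero] at hlam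
  rw [hlam]
  refine Finset.sum_eq_zero fun i _ => ?_
  rw [mul_comm, lamB_wpow_mul]
  refine lamB_neg_eq_zero p k Δ ?_ (b i)
  have := hd₀ i
  push_neg at this
  obtain ⟨α, hα⟩ := this
  refine ⟨α, ?_⟩
  have h1 : (d₀ α : ℚ) < d i α := by exact_mod_cast hα
  linarith

end PartF

section PartG
variable (Δ : Type) [Fintype Δ] [DecidableEq Δ]

lemma prod_X_pow (e : Δ → ℕ) :
    (∏ α, (MvPowerSeries.X α : MvPowerSeries Δ k) ^ e α)
      = MvPowerSeries.monomial (R := k) (Finsupp.equivFunOnFinite.symm e) 1 := by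
  have aux : ∀ s : Finset Δ, (∏ α ∈ s, (MvPowerSeries.X α : MvPowerSeries Δ k) ^ e α)
      = MvPowerSeries.monomial (R := k) (∑ α ∈ s, Finsupp.single α (e α)) 1 := by
    intro s
    induction s using Finset.induction_on with
    | empty => rw [Finset.prod_empty, Finset.sum_empty, MvPowerSeries.monomial_zero_one]
    | insert α s hα ih =>
      rw [Finset.prod_insert hα, Finset.sum_insert hα, ih, MvPowerSeries.X_pow_eq,
        MvPowerSeries.monomial_mul_monomial, one_mul]
  rw [aux Finset.univ]
  have heq : (∑ α : Δ, Finsupp.single α (e α)) = Finsupp.equivFunOnFinite.symm e := by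
    ext β
    rw [Finsupp.finset_sum_apply]
    rw [show (fun α => Finsupp.single α (e α) β) = (fun α => if α = β then e α else 0) from
      funext fun α => Finsupp.single_apply]
    rw [Finset.sum_ite_eq' Finset.univ β e, if_pos (Finset.mem_univ β)]
    rfl
  rw [heq]

lemma mem_span_of_coeff_zero {m : ℕ} (d : Fin m → Δ → ℕ) (f : MvPowerSeries Δ k)
    (hf : ∀ d₀ : Δ →₀ ℕ, (∀ i, ¬ (∀ α, d i α ≤ d₀ α)) → MvPowerSeries.coeff (R := k) d₀ f = 0) :
    f ∈ Ideal.span (Set.range fun i =>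
      ∏ α, (MvPowerSeries.X α : MvPowerSeries Δ k) ^ d i α) := by
  classical
  set D : Fin m → (Δ →₀ ℕ) := fun i => Finsupp.equivFunOnFinite.symm (d i) with hD
  have hDle : ∀ (i : Fin m) (e : Δ →₀ ℕ), D i ≤ e ↔ ∀ α, d i α ≤ e α := by
    intro i e
    rw [Finsupp.le_def]
    exact ⟨fun h α => h α, fun h α => h α⟩
  set g : Fin m → MvPowerSeries Δ k := fun i => (fun e =>
    if Fin.find? (fun j => D j ≤ e + D i) = some i
    then MvPowerSeries.coeff (R := k) (e + D i) f else 0 : (Δ →₀ ℕ) → k) with hg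
  have hgcoeff : ∀ i e, MvPowerSeries.coeff (R := k) e (g i)
      = if Fin.find? (fun j => D j ≤ e + D i) = some i
        then MvPowerSeries.coeff (R := k) (e + D i) f else 0 := fun i e => rfl
  have key : f = ∑ i, (∏ α, (MvPowerSeries.X α : MvPowerSeries Δ k) ^ d i α) * g i := by
    refine MvPowerSeries.ext fun e => ?_
    rw [map_sum]
    have hterm : ∀ i : Fin m, MvPowerSeries.coeff (R := k) e
        ((∏ α, (MvPowerSeries.X α : MvPowerSeries Δ k) ^ d i α) * g i)
        = if D i ≤ e ∧ Fin.find? (fun j => D j ≤ e) = some i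
          then MvPowerSeries.coeff (R := k) e f else 0 := by
      intro i
      rw [prod_X_pow, MvPowerSeries.coeff_monomial_mul]
      by_cases hle : D i ≤ e
      · rw [if_pos hle, one_mul, hgcoeff, tsub_add_cancel_of_le hle]
        by_cases hfind : Fin.find? (fun j => D j ≤ e) = some i
        · rw [if_pos hfind, if_pos ⟨hle, hfind⟩]
        · rw [if_neg hfind, if_neg (fun hc => hfind hc.2)]
      · rw [if_neg hle, if_neg (fun hc => hle hc.1)]
    rw [Finset.sum_congr rfl fun i _ => hterm i]
    by_cases hex : ∃ j, D j ≤ e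
    · have hsome : (Fin.find? (fun j => D j ≤ e)).isSome := Fin.isSome_find?_iff.mpr (by simpa using hex)
      obtain ⟨i₀, hi₀⟩ := Option.isSome_iff_exists.mp hsome
      have hP := Fin.find?_eq_some_iff.mp hi₀
      rw [Finset.sum_eq_single i₀]
      · rw [if_pos ⟨of_decide_eq_true hP.1, hi₀⟩]
      · intro i _ hi
        rw [if_neg]
        rintro ⟨-, hfind⟩
        rw [hi₀] at hfind
        exact hi (Option.some_injective _ hfind).symm
      · intro h; exact absurd (Finset.mem_univ i₀) h
    · push_neg at hex
      rw [Finset.sum_eq_zero fun i _ => by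
        rw [if_neg]; rintro ⟨hle, -⟩; exact hex i hle]
      refine hf e fun i => ?_
      intro hall
      exact hex i ((hDle i e).mpr hall)
  rw [key]
  exact Ideal.sum_mem _ fun i _ =>
    Ideal.mul_mem_right _ _ (Ideal.subset_span ⟨i, rfl⟩)

end PartG

end St3Aux

end Aux

/-- With `q = p ^ f`, `k` the field with `q` elements, `A` the perfect closure
of `k[[X]]`, `B = ⨂_{α∈Δ,k} A` and `Ẽ_Δ⁺` the `(ϖ_α)`-adic completion of `B`, there is an
injective `k`-algebra homomorphism `h : k[[X_α : α ∈ Δ]] → Ẽ_Δ⁺` sending `X_α` to (the image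
of) `ϖ_α`, such that for every finite family `d 1, …, d m ∈ ℕ^Δ` of multi-exponents, the
preimage under `h` of the ideal generated by the monomials `ϖ^{d i} = ∏_α ϖ_α ^ (d i α)` is
the ideal generated by the monomials `X^{d i} = ∏_α X_α ^ (d i α)`. -/

theorem statement3 (p f : ℕ) [Fact p.Prime] (hf : 1 ≤ f)
    (k : Type) [Field k] [Fintype k] [CharP k p] (hk : Fintype.card k = p ^ f)
    (Δ : Type) [Fintype Δ] [DecidableEq Δ] [Nonempty Δ] :
    ∃ h : MvPowerSeries Δ k →+* ETildePlus p k Δ,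
      (∀ a : k, h (MvPowerSeries.C (σ := Δ) (R := k) a) =
        algebraMap (BRing p k Δ) (ETildePlus p k Δ) (a • (1 : BRing p k Δ))) ∧
      Function.Injective h ∧
      (∀ α : Δ, h (MvPowerSeries.X α) =
        algebraMap (BRing p k Δ) (ETildePlus p k Δ) (piW p k Δ α)) ∧
      ∀ (m : ℕ) (d : Fin m → Δ → ℕ),
        Ideal.comap h
            (Ideal.span (Set.range fun i : Fin m =>
              algebraMap (BRing p k Δ) (ETildePlus p k Δ) (∏ α : Δ, piW p k Δ α ^ d i α))) =
          Ideal.span (Set.range fun i : Fin m =>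
            ∏ α : Δ, (MvPowerSeries.X α : MvPowerSeries Δ k) ^ d i α) := by
  classical
  refine ⟨St3Aux.hHom p k Δ, St3Aux.hHom_C p k Δ, St3Aux.hHom_injective p k Δ,
    St3Aux.hHom_X p k Δ, ?_⟩
  intro m d
  apply le_antisymm
  · intro g hg
    rw [Ideal.mem_comap] at hg
    refine St3Aux.mem_span_of_coeff_zero k Δ d g ?_
    intro d₀ hd₀
    refine St3Aux.coeff_eq_zero_of_mem_span p k Δ d g ?_ d₀ hd₀
    simpa only [St3Aux.wpow_eq_prod] using hg
  · rw [Ideal.span_le]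
    rintro _ ⟨i, rfl⟩
    rw [SetLike.mem_coe, Ideal.mem_comap, map_prod]
    have hfac : ∀ α : Δ, St3Aux.hHom p k Δ (MvPowerSeries.X α ^ d i α)
        = (algebraMap (BRing p k Δ) (ETildePlus p k Δ) (piW p k Δ α)) ^ d i α := by
      intro α
      rw [map_pow, St3Aux.hHom_X]
    rw [Finset.prod_congr rfl fun α _ => hfac α]
    rw [show (∏ α : Δ, (algebraMap (BRing p k Δ) (ETildePlus p k Δ) (piW p k Δ α)) ^ d i α)
        = algebraMap (BRing p k Δ) (ETildePlus p k Δ) (∏ α : Δ, piW p k Δ α ^ d i α) by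
      rw [map_prod]
      exact Finset.prod_congr rfl fun α _ => (map_pow _ _ _).symm]
    exact Ideal.subset_span ⟨i, rfl⟩
end

section
/- Let β ∈ Δ. An element f ∈ E_Δ satisfies φ_β(f) = f if and only if f lies in the image of the canonical k-algebra homomorphism E_{Δ∖{β}} → E_Δ, where E_{Δ∖{β}} is the localization of k[[X_α : α ∈ Δ∖{β}]] at the powers of ∏_{α≠β} X_α and the map is induced by the inclusion of variables (every X_α is invertible in E_Δ). In other words, the fixed ring of the partial Frobenius φ_β acting on E_Δ is exactly the subring of series not involving the variable X_β. -/
/-! The coefficients of `φ_β F` are those of `F` with the `β`-exponent multiplied by `q`.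
Writing a fixed element as `g = F / X_Δ ^ m` and using `φ_β X_Δ = X_β ^ (q - 1) X_Δ` gives
`φ_β F = X_β ^ ((q - 1) m) F`. Along a line of exponents varying only in `β`, with coefficients
`a_s`, this says `a_s = 0` unless `q ∣ s + (q - 1) m`, and `a_s = a_t` if `s + (q - 1) m = q t`,
that is `s - m = q (t - m)`. Descent on `|s - m|` kills every coefficient of `β`-exponent `≠ m`,
so `F = X_β ^ m G` with `G` free of `X_β`, and `g = G / (∏_{α ≠ β} X_α) ^ m`. -/

open Finsupp

namespace MvPowerSeries

variable {R σ : Type*}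

section CommSemiring

variable [CommSemiring R]

theorem coeff_single_add_X_pow_mul (β : σ) (c : ℕ) (e : σ →₀ ℕ)
    (F : MvPowerSeries σ R) : coeff (single β c + e) (X β ^ c * F) = coeff e F := by
  rw [X_pow_eq, coeff_add_monomial_mul, one_mul]

theorem exists_eq_X_pow_mul_of_coeff_eq_zero {β : σ} {m : ℕ}
    {F : MvPowerSeries σ R} (hF : ∀ e : σ →₀ ℕ, e β ≠ m → coeff e F = 0) :
    ∃ G : MvPowerSeries σ R, (∀ e : σ →₀ ℕ, e β ≠ 0 → coeff e G = 0) ∧ F = X β ^ m * G := by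
  obtain ⟨G, rfl⟩ := X_pow_dvd_iff.2 fun e he => hF e he.ne
  refine ⟨G, fun e he => ?_, rfl⟩
  rw [← coeff_single_add_X_pow_mul β m e G]
  exact hF _ (by simpa using he)

variable [DecidableEq σ]

structure IsFrobeniusAt (q : ℕ) (β : σ) (φ : MvPowerSeries σ R →+* MvPowerSeries σ R) :
    Prop where
  coeff_update_mul : ∀ F e, coeff (e.update β (q * e β)) (φ F) = coeff e F
  coeff_eq_zero_of_not_dvd : ∀ F e, ¬ q ∣ e β → coeff e (φ F) = 0

namespace IsFrobeniusAt

variable {q : ℕ} {β : σ} {φ : MvPowerSeries σ R →+* MvPowerSeries σ R}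

theorem coeff_of_eq_mul (hφ : IsFrobeniusAt q β φ) {e : σ →₀ ℕ} {t : ℕ} (h : e β = q * t)
    (F : MvPowerSeries σ R) : coeff e (φ F) = coeff (e.update β t) F := by
  simpa [← h] using hφ.coeff_update_mul F (e.update β t)

theorem map_monomial (hφ : IsFrobeniusAt q β φ) (hq : q ≠ 0) (n : σ →₀ ℕ) (a : R) :
    φ (monomial n a) = monomial (n.update β (q * n β)) a := by
  ext e
  rw [coeff_monomial]
  by_cases hdvd : q ∣ e β
  · obtain ⟨t, ht⟩ := hdvd
    rw [hφ.coeff_of_eq_mul ht, coeff_monomial]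
    congr 1
    refine propext ⟨?_, ?_⟩
    · rintro rfl
      simp [← ht]
    · rintro rfl
      have : t = n β := by simpa [hq] using ht.symm
      simp [this]
  · rw [hφ.coeff_eq_zero_of_not_dvd _ _ hdvd, if_neg]
    rintro rfl
    simp at hdvd

theorem map_X_self (hφ : IsFrobeniusAt q β φ) (hq : q ≠ 0) : φ (X β) = X β ^ q := by
  have : (single β 1).update β (q * single β 1 β) = single β q := by
    ext γ
    by_cases hγ : γ = β <;> simp [update_apply, hγ]
  rw [X_pow_eq, X_def, hφ.map_monomial hq, this]

theorem map_X_of_ne (hφ : IsFrobeniusAt q β φ) (hq : q ≠ 0) {α : σ} (h : α ≠ β) :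
    φ (X α) = X α := by
  have : (single α 1).update β (q * single α 1 β) = single α 1 := by
    ext γ
    by_cases hγ : γ = β <;> simp [update_apply, hγ, h]
  rw [X_def, hφ.map_monomial hq, this]

theorem map_prod_X_of_notMem (hφ : IsFrobeniusAt q β φ) (hq : q ≠ 0) {s : Finset σ}
    (hs : β ∉ s) : φ (∏ α ∈ s, X α) = ∏ α ∈ s, X α := by
  rw [map_prod]
  exact Finset.prod_congr rfl fun α hα => hφ.map_X_of_ne hq (ne_of_mem_of_not_mem hα hs)

theorem map_prod_X [Fintype σ] (hφ : IsFrobeniusAt q β φ) (hq : q ≠ 0) :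
    φ (∏ α, X α) = X β ^ (q - 1) * ∏ α, X α := by
  rw [← Finset.mul_prod_erase _ _ (Finset.mem_univ β), map_mul, hφ.map_X_self hq,
    hφ.map_prod_X_of_notMem hq (Finset.notMem_erase β _), ← mul_assoc, ← pow_succ,
    Nat.sub_add_cancel (Nat.one_le_iff_ne_zero.2 hq)]

theorem map_eq_self (hφ : IsFrobeniusAt q β φ) (hq : q ≠ 0) {G : MvPowerSeries σ R}
    (hG : ∀ e : σ →₀ ℕ, e β ≠ 0 → coeff e G = 0) : φ G = G := by
  ext e
  by_cases hdvd : q ∣ e β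
  · obtain ⟨t, ht⟩ := hdvd
    rw [hφ.coeff_of_eq_mul ht]
    rcases eq_or_ne t 0 with rfl | ht0
    · rw [mul_zero] at ht
      rw [← ht, update_self]
    · rw [hG _ (by simpa using ht0), hG _ (by simp [ht, hq, ht0])]
  · rw [hφ.coeff_eq_zero_of_not_dvd _ _ hdvd, hG _ fun h => hdvd (h ▸ dvd_zero q)]

theorem coeff_eq_zero_of_map_eq_X_pow_mul (hφ : IsFrobeniusAt q β φ) (hq : 2 ≤ q) {m : ℕ}
    {F : MvPowerSeries σ R} (hF : φ F = X β ^ ((q - 1) * m) * F) (e : σ →₀ ℕ)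
    (he : e β ≠ m) : coeff e F = 0 := by
  rw [← coeff_single_add_X_pow_mul β ((q - 1) * m), ← hF]
  by_cases hdvd : q ∣ (single β ((q - 1) * m) + e) β
  · obtain ⟨t, ht⟩ := hdvd
    have hshift : (e β : ℤ) - m = q * ((t : ℤ) - m) := by
      simp only [coe_add, Pi.add_apply, single_eq_same] at ht
      have := congrArg (fun n : ℕ => (n : ℤ)) ht
      push_cast [Nat.cast_sub (by omega : 1 ≤ q)] at this
      linear_combination this
    have htm : t ≠ m := by
      rintro rfl
      rw [sub_self, mul_zero, sub_eq_zero, Nat.cast_inj] at hshift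
      exact he hshift
    have hdecr : ((t : ℤ) - m).natAbs < ((e β : ℤ) - m).natAbs := by
      rw [hshift, Int.natAbs_mul, Int.natAbs_natCast]
      exact lt_mul_left (by omega) (by omega)
    rw [hφ.coeff_of_eq_mul ht]
    have := hφ.coeff_eq_zero_of_map_eq_X_pow_mul hq hF ((single β ((q - 1) * m) + e).update β t)
      (by simpa using htm)
    simpa using this
  · exact hφ.coeff_eq_zero_of_not_dvd _ _ hdvd
termination_by ((e β : ℤ) - m).natAbs
decreasing_by simpa using hdecr

end IsFrobeniusAt

end CommSemiring

namespace IsFrobeniusAt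

variable [CommRing R] [DecidableEq σ] [Fintype σ] {L : Type*} [CommRing L]
  [Algebra (MvPowerSeries σ R) L] [IsLocalization.Away (∏ α, X α : MvPowerSeries σ R) L]
  {q : ℕ} {β : σ} {φ : MvPowerSeries σ R →+* MvPowerSeries σ R} {φ' : L →+* L}

theorem exists_mul_eq_algebraMap_of_map_eq_self (hφ : IsFrobeniusAt q β φ) (hq : 2 ≤ q)
    (hφ' : ∀ F, φ' (algebraMap (MvPowerSeries σ R) L F) = algebraMap (MvPowerSeries σ R) L (φ F))
    {g : L} (hg : φ' g = g) :
    ∃ (G : MvPowerSeries σ R) (n : ℕ), (∀ e : σ →₀ ℕ, e β ≠ 0 → coeff e G = 0) ∧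
      g * algebraMap (MvPowerSeries σ R) L ((∏ α ∈ Finset.univ.erase β, X α) ^ n) =
        algebraMap (MvPowerSeries σ R) L G := by
  set S : MvPowerSeries σ R := ∏ α, X α
  set P : MvPowerSeries σ R := ∏ α ∈ Finset.univ.erase β, X α
  have hSP : S = X β * P := (Finset.mul_prod_erase _ _ (Finset.mem_univ β)).symm
  have hS : S ∈ nonZeroDivisors _ := prod_mem fun α _ => X_mem_nonzeroDivisors
  have hinj : Function.Injective (algebraMap (MvPowerSeries σ R) L) :=
    IsLocalization.injective L (Submonoid.powers_le.2 hS)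
  obtain ⟨m, F, hgF⟩ := IsLocalization.Away.surj S g
  have hφF : φ F = X β ^ ((q - 1) * m) * F := by
    have hφgF : g * algebraMap (MvPowerSeries σ R) L (φ S) ^ m =
        algebraMap (MvPowerSeries σ R) L (φ F) := by
      simpa [hg, hφ'] using congrArg φ' hgF
    rw [hφ.map_prod_X (by omega)] at hφgF
    refine (mul_cancel_right_mem_nonZeroDivisors (pow_mem hS m)).1 (hinj ?_)
    simp only [map_mul, map_pow, ← hφgF, ← hgF]
    ring
  obtain ⟨G, hG, rfl⟩ :=
    exists_eq_X_pow_mul_of_coeff_eq_zero (hφ.coeff_eq_zero_of_map_eq_X_pow_mul hq hφF)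
  refine ⟨G, m, hG, ?_⟩
  have hX : IsUnit (algebraMap (MvPowerSeries σ R) L (X β)) :=
    isUnit_of_dvd_unit (map_dvd _ (hSP ▸ dvd_mul_right _ _))
      (IsLocalization.Away.algebraMap_isUnit S)
  apply (hX.pow m).mul_left_cancel
  rw [← map_pow, ← map_mul, ← hgF, hSP, map_mul, mul_pow, map_pow, map_pow]
  ring

theorem map_eq_self_of_mul_eq_algebraMap (hφ : IsFrobeniusAt q β φ) (hq : q ≠ 0)
    (hφ' : ∀ F, φ' (algebraMap (MvPowerSeries σ R) L F) = algebraMap (MvPowerSeries σ R) L (φ F))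
    {g : L} {G : MvPowerSeries σ R} {n : ℕ} (hG : ∀ e : σ →₀ ℕ, e β ≠ 0 → coeff e G = 0)
    (hgG : g * algebraMap (MvPowerSeries σ R) L ((∏ α ∈ Finset.univ.erase β, X α) ^ n) =
      algebraMap (MvPowerSeries σ R) L G) :
    φ' g = g := by
  have hP : IsUnit (algebraMap (MvPowerSeries σ R) L (∏ α ∈ Finset.univ.erase β, X α)) :=
    isUnit_of_dvd_unit
      (map_dvd _ (Finset.prod_dvd_prod_of_subset _ _ _ (Finset.erase_subset _ _)))
      (IsLocalization.Away.algebraMap_isUnit _)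
  refine (hP.pow n).mul_right_cancel ?_
  have := congrArg φ' hgG
  rw [map_mul, hφ', hφ', map_pow, hφ.map_prod_X_of_notMem hq (Finset.notMem_erase β _),
    hφ.map_eq_self hq hG, ← hgG] at this
  simpa using this

end IsFrobeniusAt

end MvPowerSeries

theorem statement4_general (p f : ℕ) [Fact p.Prime] (hf : 1 ≤ f)
    (k : Type*) [Field k]
    (Δ : Type*) [Fintype Δ] [DecidableEq Δ] (β : Δ)
    (φ : MvPowerSeries Δ k →+* MvPowerSeries Δ k)
    (hφ1 : ∀ (F : MvPowerSeries Δ k) (e : Δ →₀ ℕ),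
      MvPowerSeries.coeff (R := k) (Finsupp.update e β (p ^ f * e β)) (φ F) =
        MvPowerSeries.coeff (R := k) e F)
    (hφ2 : ∀ (F : MvPowerSeries Δ k) (e : Δ →₀ ℕ),
      ¬ p ^ f ∣ e β → MvPowerSeries.coeff (R := k) e (φ F) = 0)
    (φ' : Localization.Away (∏ α : Δ, (MvPowerSeries.X α : MvPowerSeries Δ k)) →+*
          Localization.Away (∏ α : Δ, (MvPowerSeries.X α : MvPowerSeries Δ k)))
    (hφ' : ∀ F : MvPowerSeries Δ k,
      φ' (algebraMap (MvPowerSeries Δ k)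
            (Localization.Away (∏ α : Δ, (MvPowerSeries.X α : MvPowerSeries Δ k))) F) =
        algebraMap (MvPowerSeries Δ k)
            (Localization.Away (∏ α : Δ, (MvPowerSeries.X α : MvPowerSeries Δ k))) (φ F))
    (g : Localization.Away (∏ α : Δ, (MvPowerSeries.X α : MvPowerSeries Δ k))) :
    φ' g = g ↔
      ∃ (G : MvPowerSeries Δ k) (n : ℕ),
        (∀ e : Δ →₀ ℕ, e β ≠ 0 → MvPowerSeries.coeff (R := k) e G = 0) ∧
        g * algebraMap (MvPowerSeries Δ k)
              (Localization.Away (∏ α : Δ, (MvPowerSeries.X α : MvPowerSeries Δ k)))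
              ((∏ α ∈ Finset.univ.erase β, (MvPowerSeries.X α : MvPowerSeries Δ k)) ^ n) =
          algebraMap (MvPowerSeries Δ k)
              (Localization.Away (∏ α : Δ, (MvPowerSeries.X α : MvPowerSeries Δ k))) G := by
  have hφ : MvPowerSeries.IsFrobeniusAt (p ^ f) β φ := ⟨hφ1, hφ2⟩
  have hq : 2 ≤ p ^ f :=
    (Fact.out : p.Prime).two_le.trans (Nat.le_self_pow (by omega) p)
  exact ⟨hφ.exists_mul_eq_algebraMap_of_map_eq_self hq hφ', fun ⟨G, n, hG, hgG⟩ =>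
    hφ.map_eq_self_of_mul_eq_algebraMap (by omega) hφ' hG hgG⟩

/-- Let `k = 𝔽_q` (`q = p ^ f`), let `E_Δ` be the localization of
`k[[X_α : α ∈ Δ]]` at the powers of `X_Δ = ∏_α X_α`, and let `φ_β` be the `k`-algebra
endomorphism substituting `X_β ^ q` for `X_β` (characterized below on coefficients:
`hφ1`/`hφ2` say exactly that `φ` sends `∑ a_e X^e` to `∑ a_e X^{e'}` with
`e' = e` away from `β` and `e'(β) = q·e(β)`), with induced endomorphism `φ'` of `E_Δ`.
Then an element `g ∈ E_Δ` is fixed by `φ'` if and only if `g` lies in the image of the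
canonical map `E_{Δ∖{β}} → E_Δ`, i.e. iff `g = G / (∏_{α ≠ β} X_α)^n` for some `n` and some
power series `G` not involving the variable `X_β`. -/
theorem statement4 (p f : ℕ) [Fact p.Prime] (hf : 1 ≤ f)
    (k : Type*) [Field k] [Fintype k] (hk : Fintype.card k = p ^ f)
    (Δ : Type*) [Fintype Δ] [DecidableEq Δ] (β : Δ)
    (φ : MvPowerSeries Δ k →+* MvPowerSeries Δ k)
    (hφ1 : ∀ (F : MvPowerSeries Δ k) (e : Δ →₀ ℕ),
      MvPowerSeries.coeff (R := k) (Finsupp.update e β (p ^ f * e β)) (φ F) =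
        MvPowerSeries.coeff (R := k) e F)
    (hφ2 : ∀ (F : MvPowerSeries Δ k) (e : Δ →₀ ℕ),
      ¬ p ^ f ∣ e β → MvPowerSeries.coeff (R := k) e (φ F) = 0)
    (φ' : Localization.Away (∏ α : Δ, (MvPowerSeries.X α : MvPowerSeries Δ k)) →+*
          Localization.Away (∏ α : Δ, (MvPowerSeries.X α : MvPowerSeries Δ k)))
    (hφ' : ∀ F : MvPowerSeries Δ k,
      φ' (algebraMap (MvPowerSeries Δ k)
            (Localization.Away (∏ α : Δ, (MvPowerSeries.X α : MvPowerSeries Δ k))) F) =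
        algebraMap (MvPowerSeries Δ k)
            (Localization.Away (∏ α : Δ, (MvPowerSeries.X α : MvPowerSeries Δ k))) (φ F))
    (g : Localization.Away (∏ α : Δ, (MvPowerSeries.X α : MvPowerSeries Δ k))) :
    φ' g = g ↔
      ∃ (G : MvPowerSeries Δ k) (n : ℕ),
        (∀ e : Δ →₀ ℕ, e β ≠ 0 → MvPowerSeries.coeff (R := k) e G = 0) ∧
        g * algebraMap (MvPowerSeries Δ k)
              (Localization.Away (∏ α : Δ, (MvPowerSeries.X α : MvPowerSeries Δ k)))
              ((∏ α ∈ Finset.univ.erase β, (MvPowerSeries.X α : MvPowerSeries Δ k)) ^ n) =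
          algebraMap (MvPowerSeries Δ k)
              (Localization.Away (∏ α : Δ, (MvPowerSeries.X α : MvPowerSeries Δ k))) G :=
  statement4_general p f hf k Δ β φ hφ1 hφ2 φ' hφ' g
end

section
/- The quotient S of the polynomial ring R[T_1, …, T_d] by the ideal generated by the d elements T_j^r − Σ_{i=1}^d B_{i j}·T_i (for 1 ≤ j ≤ d) is a finite étale R-algebra: S is finitely generated as an R-module, and the R-algebra S is étale (formally étale and of finite presentation). -/
universe u

private lemma aux_binom {C : Type*} [CommRing C] (b δ : C) (h : δ * δ = 0) (n : ℕ) :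
    (b + δ) ^ (n + 1) = b ^ (n + 1) + (n + 1 : ℕ) * b ^ n * δ := by
  induction n with
  | zero => push_cast; ring
  | succ n ih =>
    have e : (b + δ) ^ (n + 1 + 1) = ((b + δ) ^ (n + 1)) * (b + δ) := by ring
    rw [e, ih]
    push_cast
    linear_combination ((n : C) + 1) * b ^ n * h

private lemma aux_pow_eq {C : Type*} [CommRing C] {r : ℕ} (hr : 1 ≤ r) (h0 : (r : C) = 0)
    (b δ : C) (h : δ * δ = 0) : (b + δ) ^ r = b ^ r := by
  obtain ⟨m, rfl⟩ := Nat.exists_eq_add_of_le hr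
  rw [add_comm 1 m, aux_binom b δ h m, show ((m+1 : ℕ) : C) = 0 by rw [add_comm]; exact h0]
  ring

open MvPolynomial Matrix in
private lemma aux_etale {R : Type u} [CommRing R] {d r : ℕ} (hr : 1 ≤ r) (h0 : (r : R) = 0)
    (B : Matrix (Fin d) (Fin d) R) (hB : IsUnit B.det) :
    Algebra.FormallyEtale R
      (MvPolynomial (Fin d) R ⧸ Ideal.span (Set.range fun j : Fin d =>
        X j ^ r - ∑ i : Fin d, C (B i j) * X i)) := by
  set f : Fin d → MvPolynomial (Fin d) R := fun j => X j ^ r - ∑ i : Fin d, C (B i j) * X i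
    with hf
  set I := Ideal.span (Set.range f) with hI
  rw [Algebra.FormallyEtale.iff_comp_bijective]
  intro Q _ _ J hJ
  have h0Q : (r : Q) = 0 := by
    rw [← map_natCast (algebraMap R Q) r, h0, map_zero]
  have hsq : ∀ x y : Q, x ∈ J → y ∈ J → x * y = 0 := fun x y hx hy => by
    have : x * y ∈ J ^ 2 := by rw [pow_two]; exact Ideal.mul_mem_mul hx hy
    rwa [hJ, Ideal.mem_bot] at this
  set B' := (B.map (algebraMap R Q)).transpose with hB'
  have hB'det : IsUnit B'.det := by
    rw [hB', Matrix.det_transpose, ← RingHom.mapMatrix_apply, ← RingHom.map_det]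
    exact hB.map _
  have := B'.invertibleOfIsUnitDet hB'det
  have hfmem : ∀ j, f j ∈ I := fun j => Ideal.subset_span ⟨j, rfl⟩
  have hmkC : ∀ a : R,
      (Ideal.Quotient.mk I) (C a) = algebraMap R (MvPolynomial (Fin d) R ⧸ I) a := fun a => rfl
  -- relation satisfied by images of the generators under any alg hom from the quotient
  have hrel : ∀ (χ : (MvPolynomial (Fin d) R ⧸ I) →ₐ[R] Q) (j : Fin d),
      (χ (Ideal.Quotient.mk I (X j))) ^ r
        = ∑ i, algebraMap R Q (B i j) * χ (Ideal.Quotient.mk I (X i)) := by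
    intro χ j
    have h2 : χ (Ideal.Quotient.mk I (f j)) = 0 := by
      rw [Ideal.Quotient.eq_zero_iff_mem.mpr (hfmem j), map_zero]
    rw [hf] at h2
    simp only [map_sub, map_pow, map_sum, _root_.map_mul, hmkC, AlgHom.commutes,
      sub_eq_zero] at h2
    exact h2
  constructor
  · -- injective
    intro φ ψ h
    set a : Fin d → Q := fun j => φ (Ideal.Quotient.mk I (X j)) with ha
    set b : Fin d → Q := fun j => ψ (Ideal.Quotient.mk I (X j)) with hb
    set δ : Fin d → Q := fun j => a j - b j with hδ
    have hδJ : ∀ j, δ j ∈ J := by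
      intro j
      have h1 : Ideal.Quotient.mk J (a j) = Ideal.Quotient.mk J (b j) := by
        have := congrArg (fun (g : _ →ₐ[R] Q ⧸ J) => g (Ideal.Quotient.mk I (X j))) h
        simpa using this
      exact Ideal.Quotient.eq.mp h1
    have hmv : B' *ᵥ δ = 0 := by
      funext j
      have h1 : (B' *ᵥ δ) j = ∑ i, algebraMap R Q (B i j) * δ i := by
        simp [Matrix.mulVec, dotProduct, hB', Matrix.transpose_apply, Matrix.map_apply]
      have h2 : ∑ i, algebraMap R Q (B i j) * δ i = a j ^ r - b j ^ r := by
        simp only [hδ]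
        rw [Finset.sum_congr rfl (fun i _ => mul_sub (algebraMap R Q (B i j)) (a i) (b i)),
          Finset.sum_sub_distrib, ← hrel φ j, ← hrel ψ j]
      have h3 : a j ^ r = b j ^ r := by
        have h4 : a j = b j + δ j := by rw [hδ]; ring
        rw [h4, aux_pow_eq hr h0Q _ _ (hsq _ _ (hδJ j) (hδJ j))]
      rw [h1, h2, h3, sub_self, Pi.zero_apply]
    have hδ0 : δ = 0 := by
      have h1 : δ = ⅟B' *ᵥ (B' *ᵥ δ) := by
        rw [Matrix.mulVec_mulVec, invOf_mul_self, Matrix.one_mulVec]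
      rw [h1, hmv, Matrix.mulVec_zero]
    apply Ideal.Quotient.algHom_ext
    apply MvPolynomial.algHom_ext
    intro i
    have h5 := congrFun hδ0 i
    simp only [hδ, Pi.zero_apply, sub_eq_zero, ha, hb] at h5
    simpa using h5
  · -- surjective
    intro g
    have hmk2 : ∀ a : R, Ideal.Quotient.mk J (algebraMap R Q a) = algebraMap R (Q ⧸ J) a :=
      fun a => rfl
    have hc0 : ∀ j, ∃ cc : Q, Ideal.Quotient.mk J cc
        = g (Ideal.Quotient.mk I (X j)) := fun j => Ideal.Quotient.mk_surjective _
    choose c hc using hc0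
    set e : Fin d → Q := fun j => (c j) ^ r - ∑ i, algebraMap R Q (B i j) * c i with he
    have heJ : ∀ j, e j ∈ J := by
      intro j
      rw [← Ideal.Quotient.eq_zero_iff_mem]
      have h1 : Ideal.Quotient.mk J (e j)
          = g (Ideal.Quotient.mk I (X j)) ^ r
            - ∑ i, algebraMap R (Q ⧸ J) (B i j) * g (Ideal.Quotient.mk I (X i)) := by
        simp only [he, map_sub, map_pow, map_sum, _root_.map_mul, hc, hmk2]
      have h2 : g (Ideal.Quotient.mk I (X j)) ^ r
          = ∑ i, algebraMap R (Q ⧸ J) (B i j) * g (Ideal.Quotient.mk I (X i)) := by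
        have h3 : g (Ideal.Quotient.mk I (f j)) = 0 := by
          rw [Ideal.Quotient.eq_zero_iff_mem.mpr (hfmem j), map_zero]
        rw [hf] at h3
        simp only [map_sub, map_pow, map_sum, _root_.map_mul, hmkC, AlgHom.commutes,
          sub_eq_zero] at h3
        exact h3
      rw [h1, h2, sub_self]
    set ε : Fin d → Q := ⅟B' *ᵥ e with hε
    have hεJ : ∀ i, ε i ∈ J := by
      intro i
      have h1 : ε i = ∑ k, ⅟B' i k * e k := by
        simp [hε, Matrix.mulVec, dotProduct]
      rw [h1]
      exact Ideal.sum_mem _ fun k _ => Ideal.mul_mem_left _ _ (heJ k)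
    set c' : Fin d → Q := fun i => c i + ε i with hc'
    have hBε : ∀ j, ∑ i, algebraMap R Q (B i j) * ε i = e j := by
      intro j
      have h1 : B' *ᵥ ε = e := by
        rw [hε, Matrix.mulVec_mulVec, mul_invOf_self, Matrix.one_mulVec]
      have h2 := congrFun h1 j
      rw [← h2]
      simp [Matrix.mulVec, dotProduct, hB', Matrix.transpose_apply, Matrix.map_apply]
    have hrel' : ∀ j, (c' j) ^ r = ∑ i, algebraMap R Q (B i j) * c' i := by
      intro j
      have h1 : (c' j) ^ r = c j ^ r := aux_pow_eq hr h0Q _ _ (hsq _ _ (hεJ j) (hεJ j))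
      have h2 : ∑ i, algebraMap R Q (B i j) * c' i
          = (∑ i, algebraMap R Q (B i j) * c i) + ∑ i, algebraMap R Q (B i j) * ε i := by
        rw [← Finset.sum_add_distrib]
        exact Finset.sum_congr rfl fun i _ => by rw [hc']; ring
      rw [h1, h2, hBε j, he]
      ring
    set φ₀ : MvPolynomial (Fin d) R →ₐ[R] Q := aeval c' with hφ₀
    have hker : I ≤ RingHom.ker φ₀ := by
      rw [hI, Ideal.span_le]
      rintro x ⟨j, rfl⟩
      have h1 : φ₀ (f j) = 0 := by
        simp only [hf, hφ₀, map_sub, map_pow, map_sum, _root_.map_mul, aeval_X, aeval_C,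
          sub_eq_zero]
        exact hrel' j
      simpa [RingHom.mem_ker] using h1
    refine ⟨Ideal.Quotient.liftₐ I φ₀ (fun x hx => hker hx), ?_⟩
    apply Ideal.Quotient.algHom_ext
    apply MvPolynomial.algHom_ext
    intro i
    simp only [AlgHom.comp_apply, Ideal.Quotient.mkₐ_eq_mk, Ideal.Quotient.liftₐ_apply,
      Ideal.Quotient.lift_mk]
    have h6 : φ₀ (X i) = c i + ε i := by simp [hφ₀, hc']
    show Ideal.Quotient.mk J (φ₀ (X i)) = g (Ideal.Quotient.mk I (X i))
    rw [h6, map_add, Ideal.Quotient.eq_zero_iff_mem.mpr (hεJ i), add_zero, hc]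

open MvPolynomial in
private lemma aux_finite {R : Type*} [CommRing R] {d r : ℕ} (hr : 2 ≤ r)
    (B : Matrix (Fin d) (Fin d) R) :
    Module.Finite R
      (MvPolynomial (Fin d) R ⧸ Ideal.span (Set.range fun j : Fin d =>
        X j ^ r - ∑ i : Fin d, C (B i j) * X i)) := by
  set f : Fin d → MvPolynomial (Fin d) R := fun j => X j ^ r - ∑ i : Fin d, C (B i j) * X i
    with hf
  set I := Ideal.span (Set.range f) with hI
  set mk : MvPolynomial (Fin d) R →+* MvPolynomial (Fin d) R ⧸ I := Ideal.Quotient.mk I with hmk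
  set g : (Fin d → Fin r) → MvPolynomial (Fin d) R ⧸ I :=
    fun ν => mk (∏ i, X i ^ (ν i : ℕ)) with hg
  have key : ∀ n (μ : Fin d → ℕ), (∑ i, μ i) ≤ n →
      mk (∏ i, X i ^ μ i) ∈ Submodule.span R (Set.range g) := by
    intro n
    induction n using Nat.strong_induction_on with
    | _ n IH =>
      intro μ hμ
      by_cases hcase : ∀ i, μ i < r
      · exact Submodule.subset_span ⟨fun i => ⟨μ i, hcase i⟩, rfl⟩
      · push_neg at hcase
        obtain ⟨j, hj⟩ := hcase
        have hjn : r ≤ n :=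
          le_trans (le_trans hj (Finset.single_le_sum (f := μ) (fun i _ => Nat.zero_le _)
            (Finset.mem_univ j))) hμ
        set μ' : Fin d → ℕ := fun i => if i = j then μ i - r else μ i with hμ'
        have hsum' : (∑ i, μ' i) = (∑ i, μ i) - r := by
          rw [Finset.sum_eq_add_sum_sdiff_singleton_of_mem (Finset.mem_univ j) μ',
            Finset.sum_eq_add_sum_sdiff_singleton_of_mem (Finset.mem_univ j) μ]
          have h1 : ∑ i ∈ Finset.univ \ {j}, μ' i = ∑ i ∈ Finset.univ \ {j}, μ i :=
            Finset.sum_congr rfl fun i hi => by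
              simp only [hμ']; rw [if_neg (by simpa using (Finset.mem_sdiff.mp hi).2)]
          rw [h1]
          simp only [hμ', if_pos rfl]
          omega
        have hprod : (∏ i, X i ^ μ i : MvPolynomial (Fin d) R)
            = X j ^ r * ∏ i, X i ^ μ' i := by
          rw [Finset.prod_eq_mul_prod_sdiff_singleton_of_mem (Finset.mem_univ j)
              (fun i => (X i ^ μ i : MvPolynomial (Fin d) R)),
            Finset.prod_eq_mul_prod_sdiff_singleton_of_mem (Finset.mem_univ j)
              (fun i => (X i ^ μ' i : MvPolynomial (Fin d) R)), ← mul_assoc, ← pow_add]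
          congr 1
          · congr 1
            simp only [hμ', if_pos rfl]
            omega
          · exact Finset.prod_congr rfl fun i hi => by
              simp only [hμ']; rw [if_neg (by simpa using (Finset.mem_sdiff.mp hi).2)]
        have hstep : mk (∏ i, X i ^ μ i)
            = ∑ i, B i j • mk (X i * ∏ k, X k ^ μ' k) := by
          rw [hprod]
          have h1 : mk (X j ^ r * ∏ k, X k ^ μ' k)
              = mk ((∑ i, C (B i j) * X i) * ∏ k, X k ^ μ' k) := by
            rw [Ideal.Quotient.mk_eq_mk_iff_sub_mem]
            rw [← sub_mul]
            exact Ideal.mul_mem_right _ _ (Ideal.subset_span ⟨j, rfl⟩)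
          rw [h1, Finset.sum_mul, map_sum]
          refine Finset.sum_congr rfl fun i _ => ?_
          rw [mul_assoc, _root_.map_mul]
          rw [show mk (C (B i j)) = algebraMap R (MvPolynomial (Fin d) R ⧸ I) (B i j) from rfl]
          rw [← Algebra.smul_def]
        rw [hstep]
        refine Submodule.sum_mem _ fun i _ => Submodule.smul_mem _ _ ?_
        have h2 : (X i * ∏ k, X k ^ μ' k : MvPolynomial (Fin d) R)
            = ∏ k, X k ^ (μ' k + if k = i then 1 else 0) := by
          rw [Finset.prod_eq_mul_prod_sdiff_singleton_of_mem (Finset.mem_univ i)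
              (fun k => (X k ^ (μ' k + if k = i then 1 else 0) : MvPolynomial (Fin d) R)),
            Finset.prod_eq_mul_prod_sdiff_singleton_of_mem (Finset.mem_univ i)
              (fun k => (X k ^ μ' k : MvPolynomial (Fin d) R)), if_pos rfl, pow_add, pow_one,
            ← mul_assoc, mul_comm (X i ^ μ' i) (X i)]
          rw [mul_assoc, mul_assoc]
          congr 2
          exact Finset.prod_congr rfl fun k hk => by
            rw [if_neg (by simpa using (Finset.mem_sdiff.mp hk).2), add_zero]
        rw [h2]
        refine IH (n - 1) (by omega) _ ?_
        have h3 : (∑ k, (μ' k + if k = i then 1 else 0)) = (∑ k, μ' k) + 1 := by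
          rw [Finset.sum_add_distrib]
          simp
        omega
  have hspan : Submodule.span R (Set.range g) = ⊤ := by
    rw [Submodule.eq_top_iff']
    intro x
    obtain ⟨q, rfl⟩ := Ideal.Quotient.mk_surjective (I := I) x
    induction q using MvPolynomial.induction_on' with
    | add p q hp hq => rw [map_add]; exact add_mem hp hq
    | monomial μ a =>
      have h4 : (monomial μ a : MvPolynomial (Fin d) R) = C a * ∏ i, X i ^ μ i := by
        rw [monomial_eq]
        congr 1
        exact Finsupp.prod_fintype _ _ fun i => pow_zero _
      show mk _ ∈ _
      rw [h4, _root_.map_mul,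
        show mk (C a) = algebraMap R (MvPolynomial (Fin d) R ⧸ I) a from rfl, ← Algebra.smul_def]
      exact Submodule.smul_mem _ _ (key (∑ i, μ i) _ le_rfl)
  exact ⟨⟨(Set.finite_range g).toFinset, by rwa [Set.Finite.coe_toFinset]⟩⟩

/-- Let `p` be a prime, `s ≥ 1`, `r = p ^ s`, `R` a commutative ring of
characteristic `p`, and `B` a `d × d` matrix over `R` whose determinant is a unit.  Then the
quotient of the polynomial ring `R[T₁, …, T_d]` by the ideal generated by the elements
`T_j ^ r - ∑ i, B i j • T_i` is a finite étale `R`-algebra. -/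
theorem statement7 (p s : ℕ) [Fact p.Prime] (hs : 1 ≤ s)
    (R : Type*) [CommRing R] [CharP R p]
    (d : ℕ) (B : Matrix (Fin d) (Fin d) R) (hB : IsUnit B.det) :
    Module.Finite R
      (MvPolynomial (Fin d) R ⧸
        Ideal.span (Set.range fun j : Fin d =>
          MvPolynomial.X j ^ (p ^ s) -
            ∑ i : Fin d, MvPolynomial.C (B i j) * MvPolynomial.X i)) ∧
    Algebra.Etale R
      (MvPolynomial (Fin d) R ⧸
        Ideal.span (Set.range fun j : Fin d =>
          MvPolynomial.X j ^ (p ^ s) -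
            ∑ i : Fin d, MvPolynomial.C (B i j) * MvPolynomial.X i)) := by
  have hp : 2 ≤ p := (Fact.out : p.Prime).two_le
  have hr2 : 2 ≤ p ^ s := le_trans hp (Nat.le_self_pow (by omega) p)
  have hr1 : 1 ≤ p ^ s := by omega
  have h0 : ((p ^ s : ℕ) : R) = 0 := by
    push_cast
    rw [CharP.cast_eq_zero R p]
    exact zero_pow (by omega)
  refine ⟨aux_finite hr2 B, ?_, ?_⟩
  · exact aux_etale hr1 h0 B hB
  · refine Algebra.FinitePresentation.quotient ?_
    exact ⟨(Set.finite_range _).toFinset, by rw [Set.Finite.coe_toFinset]⟩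
end

section
/- Let d be a natural number such that the Frac(R)-vector space Frac(R) ⊗_R D has dimension d, and let v_1, …, v_d ∈ D be elements with φ(v_i) = v_i for every i. If the R-linear map R^d → D sending the i-th standard basis vector to v_i is injective, then it is an isomorphism of R-modules. -/
/-!
Localize at a maximal ideal `𝔪`. Over the local domain `A = R_𝔪` the module `A ⊗ D` is free of
rank `d`, and the images `w i = 1 ⊗ v i` are linearly independent and fixed by the base change
`ψ` of `φ`. If `V` is the matrix of the `w i` and `C` that of `ψ` in a basis, fixedness reads
`V = C * V ^ (r)` (entrywise `r`-th powers), so `det V = det C * (det V) ^ r`. As `det V ≠ 0` and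
`r ≥ 2`, cancelling gives `1 = det C * (det V) ^ (r - 1)`: `det V` is a unit and the `w i` span
`A ⊗ D`. Surjectivity is local on maximal ideals.
-/

open scoped TensorProduct
open Module Submodule

section SemilinearBaseChange

variable {R A D : Type*} [CommRing R] [CommRing A] [Algebra R A] [AddCommGroup D] [Module R D]
  {τ : R →+* R} {σ : A →+* A}

noncomputable def LinearMap.semilinearBaseChange
    (hστ : ∀ x, σ (algebraMap R A x) = algebraMap R A (τ x)) (φ : D →ₛₗ[τ] D) :
    A ⊗[R] D →ₛₗ[σ] A ⊗[R] D where
  __ := TensorProduct.liftAddHom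
    (AddMonoidHom.mk'
      (fun a ↦ (TensorProduct.mk R A D (σ a)).toAddMonoidHom.comp φ.toAddMonoidHom)
      fun a b ↦ by ext; simp)
    fun r a x ↦ by
      change σ (r • a) ⊗ₜ φ x = σ a ⊗ₜ φ (r • x)
      rw [Algebra.smul_def, map_mul, hστ, ← Algebra.smul_def, φ.map_smulₛₗ,
        TensorProduct.smul_tmul]
  map_smul' c z := by
    induction z using TensorProduct.induction_on with
    | zero => simp
    | tmul a x => simp [TensorProduct.smul_tmul']
    | add y z hy hz => simp_all

@[simp]
lemma LinearMap.semilinearBaseChange_tmul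
    (hστ : ∀ x, σ (algebraMap R A x) = algebraMap R A (τ x)) (φ : D →ₛₗ[τ] D) (a : A) (x : D) :
    φ.semilinearBaseChange hστ (a ⊗ₜ x) = σ a ⊗ₜ φ x := rfl

end SemilinearBaseChange

lemma isUnit_of_eq_mul_pow {A : Type*} [CommRing A] [IsDomain A] {a c : A} {n : ℕ} (hn : 2 ≤ n)
    (ha : a ≠ 0) (h : a = c * a ^ n) : IsUnit a := by
  obtain ⟨k, rfl⟩ := Nat.exists_eq_add_of_le' hn
  refine IsUnit.of_mul_eq_one (c * a ^ k) (mul_left_cancel₀ ha ?_)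
  linear_combination -h

namespace Module.Basis

variable {A N ι : Type*} [CommRing A] [AddCommGroup N] [Module A N] [Fintype ι] {σ : A →+* A}

lemma toMatrix_eq_mul_map_of_apply_eq_self (b : Basis ι A N) (ψ : N →ₛₗ[σ] N)
    {w : ι → N} (hw : ∀ i, ψ (w i) = w i) :
    b.toMatrix w = b.toMatrix (ψ ∘ b) * (b.toMatrix w).map σ := by
  ext k i
  conv_lhs => rw [toMatrix_apply, ← hw i, ← b.sum_repr (w i)]
  simp only [map_sum, map_smulₛₗ, RingHom.id_apply, Finsupp.finsetSum_apply, Finsupp.smul_apply,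
    smul_eq_mul, Matrix.mul_apply, Matrix.map_apply, toMatrix_apply, Function.comp_apply, mul_comm]

variable [DecidableEq ι]

lemma det_eq_mul_map_det_of_apply_eq_self (b : Basis ι A N) (ψ : N →ₛₗ[σ] N)
    {w : ι → N} (hw : ∀ i, ψ (w i) = w i) :
    b.det w = (b.toMatrix (ψ ∘ b)).det * σ (b.det w) := by
  rw [b.det_apply, σ.map_det, RingHom.mapMatrix_apply, ← Matrix.det_mul,
    ← b.toMatrix_eq_mul_map_of_apply_eq_self ψ hw]

lemma det_ne_zero_of_linearIndependent [IsDomain A] (b : Basis ι A N) {w : ι → N}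
    (hw : LinearIndependent A w) : b.det w ≠ 0 := by
  rw [b.det_apply, ← Matrix.nonsingular_iff_det_ne_zero, ← Matrix.linearIndependent_col_iff]
  exact hw.map' b.equivFun.toLinearMap b.equivFun.ker

theorem span_eq_top_of_linearIndependent_of_apply_eq_self [IsDomain A] {n : ℕ}
    (b : Basis ι A N) (ψ : N →ₛₗ[σ] N) (hσ : ∀ a, σ a = a ^ n) (hn : 2 ≤ n) {w : ι → N}
    (hw : ∀ i, ψ (w i) = w i) (hli : LinearIndependent A w) : span A (Set.range w) = ⊤ :=
  (is_basis_iff_det b).mpr (isUnit_of_eq_mul_pow hn (b.det_ne_zero_of_linearIndependent hli)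
    (hσ _ ▸ b.det_eq_mul_map_det_of_apply_eq_self ψ hw)) |>.2

end Module.Basis

section Localization

variable {R D : Type*} [CommRing R] [IsDomain R] [AddCommGroup D] [Module R D]
  [Module.Finite R D] [Projective R D] (P : Ideal R) [P.IsPrime]

lemma finrank_localization_tensorProduct :
    finrank (Localization.AtPrime P) (Localization.AtPrime P ⊗[R] D) =
      finrank (FractionRing R) (FractionRing R ⊗[R] D) := by
  have : Free (Localization.AtPrime P) (Localization.AtPrime P ⊗[R] D) :=
    free_of_flat_of_isLocalRing
  rw [← (TensorProduct.AlgebraTensorModule.cancelBaseChange R (Localization.AtPrime P)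
    (FractionRing R) (FractionRing R) D).finrank_eq]
  exact finrank_baseChange.symm

theorem span_range_tmul_eq_top_of_linearIndependent_of_apply_eq_self
    {p s : ℕ} [Fact p.Prime] [CharP R p] (hs : 1 ≤ s) (φ : D →ₛₗ[iterateFrobenius R p s] D)
    {d : ℕ} (hd : finrank (FractionRing R) (FractionRing R ⊗[R] D) = d)
    {v : Fin d → D} (hv : ∀ i, φ (v i) = v i) (hli : LinearIndependent R v) :
    span (Localization.AtPrime P)
      (Set.range fun i ↦ (1 : Localization.AtPrime P) ⊗ₜ[R] v i) = ⊤ := by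
  set A := Localization.AtPrime P
  have : CharP A p :=
    charP_of_injective_algebraMap (IsLocalization.injective A P.primeCompl_le_nonZeroDivisors) p
  have : Free A (A ⊗[R] D) := free_of_flat_of_isLocalRing
  let b := finBasisOfFinrankEq A (A ⊗[R] D)
    ((finrank_localization_tensorProduct P).trans hd)
  let ψ := φ.semilinearBaseChange (σ := iterateFrobenius A p s)
    fun x ↦ by simp [iterateFrobenius_def]
  exact b.span_eq_top_of_linearIndependent_of_apply_eq_self ψ (iterateFrobenius_def p s)
    (Nat.one_lt_pow (by omega) (Fact.out : p.Prime).one_lt)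
    (fun i ↦ (φ.semilinearBaseChange_tmul _ 1 (v i)).trans (by rw [map_one, hv]))
    (hli.of_isLocalizedModule A P.primeCompl (TensorProduct.mk R A D 1))

end Localization

theorem statement9_general (p s : ℕ) [Fact p.Prime] (hs : 1 ≤ s)
    (R : Type*) [CommRing R] [IsDomain R] [CharP R p]
    (D : Type*) [AddCommGroup D] [Module R D] [Module.Finite R D] [Module.Projective R D]
    (φ : D →+ D) (hsemi : ∀ (x : R) (m : D), φ (x • m) = x ^ (p ^ s) • φ m)
    (d : ℕ)
    (hd : Module.finrank (FractionRing R) ((FractionRing R) ⊗[R] D) = d)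
    (v : Fin d → D) (hv : ∀ i, φ (v i) = v i)
    (hinj : Function.Injective ⇑(Fintype.linearCombination R v)) :
    Function.Bijective ⇑(Fintype.linearCombination R v) := by
  let φ' : D →ₛₗ[iterateFrobenius R p s] D := { φ with map_smul' := hsemi }
  have hli : LinearIndependent R v :=
    linearIndependent_iff_injective_fintypeLinearCombination.mpr hinj
  refine ⟨hinj, ?_⟩
  rw [← LinearMap.range_eq_top, Fintype.range_linearCombination]
  refine Submodule.eq_top_of_localization_maximal (fun P _ ↦ Localization.AtPrime P)
    (fun P _ ↦ Localization.AtPrime P ⊗[R] D) (fun P _ ↦ TensorProduct.mk R _ D 1) _ fun P _ ↦ ?_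
  rw [localized'_span, ← Set.range_comp]
  exact span_range_tmul_eq_top_of_linearIndependent_of_apply_eq_self P hs φ' hd hv hli

/-- Let `R` be an integral domain of characteristic `p`, `r = p ^ s` with
`s ≥ 1`, `D` a finitely generated projective `R`-module, and `φ : D → D` an additive map,
semilinear for the `r`-power Frobenius, whose image generates `D` as an `R`-module (étaleness).
If the `Frac(R)`-vector space `Frac(R) ⊗_R D` has dimension `d` and `v : Fin d → D` is a family
of `φ`-fixed vectors such that the `R`-linear map `R ^ d → D` sending the `i`-th standard basis
vector to `v i` is injective, then this map is an isomorphism (i.e. bijective). -/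
theorem statement9 (p s : ℕ) [Fact p.Prime] (hs : 1 ≤ s)
    (R : Type*) [CommRing R] [IsDomain R] [CharP R p]
    (D : Type*) [AddCommGroup D] [Module R D] [Module.Finite R D] [Module.Projective R D]
    (φ : D →+ D) (hsemi : ∀ (x : R) (m : D), φ (x • m) = x ^ (p ^ s) • φ m)
    (hetale : Submodule.span R (Set.range ⇑φ) = ⊤)
    (d : ℕ)
    (hd : Module.finrank (FractionRing R) ((FractionRing R) ⊗[R] D) = d)
    (v : Fin d → D) (hv : ∀ i, φ (v i) = v i)
    (hinj : Function.Injective ⇑(Fintype.linearCombination R v)) :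
    Function.Bijective ⇑(Fintype.linearCombination R v) :=
  statement9_general p s hs R D φ hsemi d hd v hv hinj
end

section
/- The image of the canonical map D → T ⊗_R D, d ↦ 1 ⊗ d, is a closed subset of T ⊗_R D. -/
/-!
T finitely generated projective `R`-module `D` is a retract of some `Rⁿ`, say `f ∘ g = id` with
`g : D → Rⁿ`. Then `x ∈ T ⊗[R] D` is of the form `1 ⊗ d` exactly when its image in
`T ⊗[R] Rⁿ ≅ Tⁿ` has all coordinates in `R`. That image is a continuous function of `x` for the
module topology, and `Rⁿ` is closed in `Tⁿ`.
-/

open Set TensorProduct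

section

variable {R T : Type*} [CommSemiring R] [CommSemiring T] [Algebra R T]

theorem range_one_tmul_eq_preimage_of_retract {M N : Type*} [AddCommMonoid M] [Module R M]
    [AddCommMonoid N] [Module R N] {f : N →ₗ[R] M} {g : M →ₗ[R] N} (hfg : f ∘ₗ g = .id) :
    range (fun m : M => (1 : T) ⊗ₜ[R] m) =
      g.baseChange T ⁻¹' range (fun n : N => (1 : T) ⊗ₜ[R] n) := by
  ext x
  constructor
  · rintro ⟨m, rfl⟩
    exact ⟨g m, (g.baseChange_tmul 1 m).symm⟩
  · rintro ⟨n, hn⟩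
    refine ⟨f n, ?_⟩
    calc (1 : T) ⊗ₜ[R] f n = f.baseChange T (g.baseChange T x) := by
          rw [← hn, f.baseChange_tmul]
      _ = x := by
          rw [← LinearMap.comp_apply, ← LinearMap.baseChange_comp, hfg, LinearMap.baseChange_id,
            LinearMap.id_apply]

theorem range_one_tmul_pi_eq_preimage (ι : Type*) [Fintype ι] [DecidableEq ι] :
    range (fun r : ι → R => (1 : T) ⊗ₜ[R] r) =
      piScalarRight R T T ι ⁻¹' range (algebraMap (ι → R) (ι → T)) := by
  ext x
  constructor
  · rintro ⟨r, rfl⟩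
    exact ⟨r, (LinearEquiv.symm_apply_eq _).mp (piScalarRight_symm_algebraMap R T ι r)⟩
  · rintro ⟨r, hr⟩
    exact ⟨r, (piScalarRight_symm_algebraMap R T ι r).symm.trans
      ((LinearEquiv.symm_apply_eq _).mpr hr)⟩

theorem isClosed_range_one_tmul [TopologicalSpace T] [IsTopologicalSemiring T]
    (hR : IsClosed (range (algebraMap R T))) (D : Type*) [AddCommMonoid D] [Module R D]
    [Module.Finite R D] [Module.Projective R D]
    [TopologicalSpace (T ⊗[R] D)] [IsModuleTopology T (T ⊗[R] D)] :
    IsClosed (range fun d : D => (1 : T) ⊗ₜ[R] d) := by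
  obtain ⟨n, f, g, -, -, hfg⟩ := Module.Finite.exists_comp_eq_id_of_projective R D
  let coords : T ⊗[R] D →ₗ[T] Fin n → T :=
    (piScalarRight R T T (Fin n)).toLinearMap ∘ₗ g.baseChange T
  have hcoords : range (fun d : D => (1 : T) ⊗ₜ[R] d) =
      coords ⁻¹' univ.pi fun _ => range (algebraMap R T) := by
    rw [range_one_tmul_eq_preimage_of_retract hfg, range_one_tmul_pi_eq_preimage,
      ← range_piMap]
    rfl
  rw [hcoords]
  exact (isClosed_set_pi fun _ _ => hR).preimage (IsModuleTopology.continuous_of_linearMap coords)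

end

/-- Let `T` be a commutative topological ring, `R ⊆ T` a closed subring and
`D` a finitely generated projective `R`-module.  Equip `T ⊗[R] D` with its module topology over
`T`.  Then the image of the canonical map `D → T ⊗[R] D`, `d ↦ 1 ⊗ d`, is closed. -/
theorem statement10 (T : Type*) [CommRing T] [TopologicalSpace T] [IsTopologicalRing T]
    (R : Subring T) (hR : IsClosed (R : Set T))
    (D : Type*) [AddCommGroup D] [Module R D] [Module.Finite R D] [Module.Projective R D] :
    letI : TopologicalSpace (T ⊗[R] D) := moduleTopology T (T ⊗[R] D)
    IsClosed (Set.range (fun d : D => (1 : T) ⊗ₜ[R] d)) := by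
  let : TopologicalSpace (T ⊗[R] D) := moduleTopology T (T ⊗[R] D)
  have : IsModuleTopology T (T ⊗[R] D) := ⟨rfl⟩
  have hR' : IsClosed (range (algebraMap R T)) := by
    rwa [show algebraMap R T = R.subtype from rfl, Subring.coe_subtype, Subtype.range_coe]
  exact isClosed_range_one_tmul hR' D
end

section
/- Let H : C ⥤ D be a functor together with a natural isomorphism e : H ⋙ G ≅ F. Then there exists a continuous group homomorphism u : Aut(G) → Aut(F) such that for every object X of C and every natural automorphism g ∈ Aut(G), the component of u(g) at X is obtained from the component of g at H(X) by conjugating with e, i.e. (u g)_X = e_X ∘ g_{H(X)} ∘ e_X⁻¹ as bijections of the finite set F(X). -/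
open CategoryTheory PreGaloisCategory

/-- Let `C`, `D` be Galois categories with fiber functors
`F : C ⥤ FintypeCat` and `G : D ⥤ FintypeCat`, and let `H : C ⥤ D` be a functor together with
a natural isomorphism `e : H ⋙ G ≅ F`.  Then there is a continuous group homomorphism
`u : Aut G →* Aut F` (between the fundamental groups, with their natural profinite-type
topologies) such that for every `g : Aut G` and every object `X` of `C`, the component of
`u g` at `X` is `e.hom.app X ∘ g.hom.app (H.obj X) ∘ e.inv.app X`. -/
theorem statement11 {C : Type*} {D : Type*} [Category C] [Category D]
    [GaloisCategory C] [GaloisCategory D]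
    (F : C ⥤ FintypeCat) (G : D ⥤ FintypeCat)
    [FiberFunctor F] [FiberFunctor G]
    (H : C ⥤ D) (e : H ⋙ G ≅ F) :
    ∃ u : Aut G →* Aut F, Continuous u ∧
      ∀ (g : Aut G) (X : C),
        (u g).hom.app X = e.inv.app X ≫ g.hom.app (H.obj X) ≫ e.hom.app X := by
  let u : Aut G →* Aut F :=
    e.conjAut.toMonoidHom.comp (((Functor.whiskeringLeft C D FintypeCat).obj H).mapAut (X := G))
  have happ : ∀ (g : Aut G) (X : C),
      (u g).hom.app X = e.inv.app X ≫ g.hom.app (H.obj X) ≫ e.hom.app X := by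
    intro g X
    show (e.conjAut _).hom.app X = _
    rw [Iso.conjAut_apply]
    rfl
  refine ⟨u, ?_, happ⟩
  rw [continuous_induced_rng]
  refine continuous_pi fun X ↦ ?_
  have : (fun g : Aut G ↦ autEmbedding F (u g) X) =
      (fun a : Aut (G.obj (H.obj X)) ↦
        (e.app X).conjAut a) ∘ (fun p ↦ p (H.obj X)) ∘ autEmbedding G := by
    funext g
    simp only [Function.comp_apply, autEmbedding_apply]
    ext x
    have := happ g X
    exact congrArg (fun f => (ConcreteCategory.hom f) x) this
  show Continuous fun g : Aut G ↦ autEmbedding F (u g) X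
  rw [this]
  exact Continuous.comp continuous_of_discreteTopology
    ((continuous_apply _).comp continuous_induced_dom)
end

section
/- (i) For every n ∈ ℕ^Δ there exists k ∈ ℕ^Δ with k(α) < f for every α ∈ Δ and k(β) = 0 for some β ∈ Δ, such that n + N ⊆ k + N. (ii) For all n, m ∈ ℕ^Δ, the set R = {(a, c) ∈ ℕ^Δ × ℕ : n + f·a + c·𝟙 ∈ m + N} has only finitely many minimal elements for the product order, and every element of R is ≥ one of these minimal elements. (Together these express that the submonoid Φ_{Δ,q,p} is of 'subtle finite index' in Φ_{Δ,p}.) -/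
/-- Every element above a witness of `P` lies above a minimal one, in a
well-founded partial order. -/
lemma exists_minimal_below {α : Type*} [PartialOrder α] [WellFoundedLT α]
    (P : α → Prop) {x : α} (hx : P x) : ∃ y, Minimal P y ∧ y ≤ x := by
  obtain ⟨z, ⟨hz, hzx⟩, hmin⟩ :=
    (IsWellFounded.wf (r := ((· < ·) : α → α → Prop))).has_min
      {y | P y ∧ y ≤ x} ⟨x, hx, le_refl x⟩
  refine ⟨z, ⟨hz, fun w hw hwz => ?_⟩, hzx⟩
  by_contra h
  exact hmin w ⟨hw, hwz.trans hzx⟩ (lt_of_le_not_ge hwz h)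

/-- Dickson's lemma: the set of minimal elements of any predicate on
`ℕ^Δ × ℕ` is finite. -/
lemma minimal_finite {Δ : Type*} [Fintype Δ] (P : (Δ → ℕ) × ℕ → Prop) :
    {x | Minimal P x}.Finite := by
  have hpwo : (Set.univ : Set ((Δ → ℕ) × ℕ)).IsPWO := by
    have h1 : (Set.univ : Set (Δ → ℕ)).IsPWO :=
      Set.isPWO_univ_iff.2 inferInstance
    have h2 : (Set.univ : Set ℕ).IsPWO := (Set.isWF_univ_iff.2 inferInstance).isPWO
    simpa [Set.univ_prod_univ] using h1.prod h2
  have hanti : IsAntichain (· ≤ ·) {x | Minimal P x} := by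
    intro x hx y hy hxy hle
    exact hxy (le_antisymm hle (hy.2 hx.1 hle))
  exact hanti.finite_of_partiallyWellOrderedOn (hpwo.mono (Set.subset_univ _))

/-- The submonoid `N = {f • a + c • 𝟙 : a ∈ ℕ^Δ, c ∈ ℕ}` of `ℕ^Δ`, as a set. -/
def subtleSubmonoid (Δ : Type*) (f : ℕ) : Set (Δ → ℕ) :=
  {x | ∃ (a : Δ → ℕ) (c : ℕ), x = f • a + c • (1 : Δ → ℕ)}

/-- Let `Δ` be a nonempty finite set, `f ≥ 1`, and
`N = {f•a + c•𝟙} ⊆ ℕ^Δ`.  (i) Every translate `n + N` is contained in a translate `k + N`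
with `k α < f` for all `α` and `k β = 0` for some `β`.  (ii) For all `n, m ∈ ℕ^Δ` the set
`R = {(a, c) : n + f•a + c•𝟙 ∈ m + N}` has finitely many minimal elements for the product
order, and every element of `R` lies above one of them.  (This expresses that `Φ_{Δ,q,p}` is
of subtle finite index in `Φ_{Δ,p}`.) -/
theorem statement12 (Δ : Type*) [Fintype Δ] [Nonempty Δ] (f : ℕ) (hf : 1 ≤ f) :
    (∀ n : Δ → ℕ, ∃ k : Δ → ℕ, (∀ α, k α < f) ∧ (∃ β, k β = 0) ∧
      {x | ∃ y ∈ subtleSubmonoid Δ f, x = n + y} ⊆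
        {x | ∃ y ∈ subtleSubmonoid Δ f, x = k + y}) ∧
    (∀ n m : Δ → ℕ,
      {x : (Δ → ℕ) × ℕ | Minimal
          (fun ac : (Δ → ℕ) × ℕ =>
            n + f • ac.1 + ac.2 • (1 : Δ → ℕ) ∈
              {x | ∃ y ∈ subtleSubmonoid Δ f, x = m + y}) x}.Finite ∧
      ∀ ac : (Δ → ℕ) × ℕ,
        n + f • ac.1 + ac.2 • (1 : Δ → ℕ) ∈ {x | ∃ y ∈ subtleSubmonoid Δ f, x = m + y} →
        ∃ bd : (Δ → ℕ) × ℕ,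
          Minimal (fun bd' : (Δ → ℕ) × ℕ =>
            n + f • bd'.1 + bd'.2 • (1 : Δ → ℕ) ∈
              {x | ∃ y ∈ subtleSubmonoid Δ f, x = m + y}) bd ∧ bd ≤ ac) := by
  constructor
  · intro n
    set r : Δ → ℕ := fun α => n α % f with hr
    obtain ⟨β, hβm, hβmin⟩ := Finset.exists_min_image Finset.univ r Finset.univ_nonempty
    set rmin := r β with hrmin
    refine ⟨fun α => r α - rmin, ?_, ⟨β, Nat.sub_self _⟩, ?_⟩
    · intro α
      exact lt_of_le_of_lt (Nat.sub_le _ _) (Nat.mod_lt _ hf)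
    · rintro x ⟨y, ⟨a, c, rfl⟩, rfl⟩
      refine ⟨f • ((fun α => n α / f) + a) + (rmin + c) • (1 : Δ → ℕ),
        ⟨_, _, rfl⟩, ?_⟩
      funext α
      have hle : rmin ≤ r α := hβmin α (Finset.mem_univ α)
      have hra : r α = n α % f := rfl
      have h2 := Nat.mod_add_div (n α) f
      simp only [Pi.add_apply, Pi.smul_apply, Pi.one_apply, smul_eq_mul, mul_one,
        Nat.mul_add]
      omega
  · intro n m
    refine ⟨minimal_finite _, fun ac hac => ?_⟩
    obtain ⟨bd, hbd, hle⟩ := exists_minimal_below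
      (fun ac : (Δ → ℕ) × ℕ =>
        n + f • ac.1 + ac.2 • (1 : Δ → ℕ) ∈
          {x | ∃ y ∈ subtleSubmonoid Δ f, x = m + y}) hac
    exact ⟨bd, hbd, hle⟩
end

section
/- The subset H := {(κ(i), i⁻¹) : i ∈ I} of the semidirect product M ⋊_λ N is a normal subgroup of M ⋊_λ N. Consequently, since each relator (κ(i), 1)·(1, i)⁻¹ equals (κ(i), i⁻¹), the normal closure in M ⋊_λ N of the set of relators {(κ(i), 1)·(1, i)⁻¹ : i ∈ I} is exactly H, so the quotient identifying (κ(i), 1) with (1, i) for all i ∈ I is the quotient of M ⋊_λ N by H. -/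
/-- Let `M, N` be groups, `λ : N → Aut(M)`, and let `I ⊴ N` be a normal
subgroup together with a homomorphism `κ : I → M` satisfying
`κ(i)·m = λ(i)(m)·κ(i)` and `λ(n)(κ(i)) = κ(n i n⁻¹)`.  Then each relator
`(κ(i), 1)·(1, i)⁻¹` equals `(κ(i), i⁻¹)`, the set `H = {(κ(i), i⁻¹) : i ∈ I}` is (the
carrier of) a normal subgroup of `M ⋊[λ] N`, and the normal closure in `M ⋊[λ] N` of the set
of relators `{(κ(i), 1)·(1, i)⁻¹ : i ∈ I}` is exactly `H`; hence the quotient identifying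
`(κ(i), 1)` with `(1, i)` for all `i ∈ I` is the quotient of `M ⋊[λ] N` by `H`. -/
theorem statement13 (M N : Type*) [Group M] [Group N] (lam : N →* MulAut M)
    (I : Subgroup N) (hI : I.Normal) (κ : I →* M)
    (h1 : ∀ (i : I) (m : M), κ i * m = lam (↑i : N) m * κ i)
    (h2 : ∀ (i : I) (n : N), lam n (κ i) = κ ⟨n * (↑i : N) * n⁻¹, hI.conj_mem (↑i) i.2 n⟩) :
    (∀ i : I, (⟨κ i, 1⟩ : M ⋊[lam] N) * (⟨1, (↑i : N)⟩ : M ⋊[lam] N)⁻¹ =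
        (⟨κ i, ((↑i : N))⁻¹⟩ : M ⋊[lam] N)) ∧
    ∃ H : Subgroup (M ⋊[lam] N),
      (H : Set (M ⋊[lam] N)) =
        Set.range (fun i : I => (⟨κ i, ((↑i : N))⁻¹⟩ : M ⋊[lam] N)) ∧
      H.Normal ∧
      Subgroup.normalClosure
        (Set.range (fun i : I =>
          (⟨κ i, 1⟩ : M ⋊[lam] N) * (⟨1, (↑i : N)⟩ : M ⋊[lam] N)⁻¹)) = H := by
  have hcomp : ∀ (a b : N) (x : M), lam a (lam b x) = lam (a * b) x := by
    intro a b x; simp [map_mul]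
  have hrel : ∀ i : I, (⟨κ i, 1⟩ : M ⋊[lam] N) * (⟨1, (↑i : N)⟩ : M ⋊[lam] N)⁻¹ =
      (⟨κ i, ((↑i : N))⁻¹⟩ : M ⋊[lam] N) := by
    intro i
    ext
    · show κ i * lam (1 : N) (lam ((↑i : N))⁻¹ 1⁻¹) = κ i
      simp
    · show 1 * ((↑i : N))⁻¹ = ((↑i : N))⁻¹
      simp
  set f : I → M ⋊[lam] N := fun i => (⟨κ i, ((↑i : N))⁻¹⟩ : M ⋊[lam] N) with hf
  have hmul : ∀ i j : I, f i * f j = f (j * i) := by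
    intro i j
    ext
    · show κ i * lam (↑i : N)⁻¹ (κ j) = κ (j * i)
      have e : lam ((i⁻¹ : I) : N) (κ j) =
          κ ⟨((i⁻¹ : I) : N) * ↑j * ((i⁻¹ : I) : N)⁻¹, _⟩ := h2 j ((i⁻¹ : I) : N)
      rw [show ((↑i : N)⁻¹) = ((i⁻¹ : I) : N) from rfl, e, ← map_mul]
      congr 1
      ext
      show (↑i : N) * (((↑i : N))⁻¹ * ↑j * ((↑i : N)⁻¹)⁻¹) = ↑j * ↑i
      group
    · show (↑i : N)⁻¹ * (↑j : N)⁻¹ = (↑(j * i) : N)⁻¹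
      simp [mul_inv_rev]
  have hone : f (1 : I) = 1 := by
    ext
    · show κ 1 = 1
      simp
    · show ((1 : N))⁻¹ = 1
      simp
  have hinv : ∀ i : I, (f i)⁻¹ = f i⁻¹ := by
    intro i
    have h : f i * f i⁻¹ = 1 := by rw [hmul, inv_mul_cancel, hone]
    exact (eq_inv_of_mul_eq_one_right h).symm
  let H : Subgroup (M ⋊[lam] N) :=
    { carrier := Set.range f
      one_mem' := ⟨1, hone⟩
      mul_mem' := by rintro _ _ ⟨i, rfl⟩ ⟨j, rfl⟩; exact ⟨j * i, (hmul i j).symm⟩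
      inv_mem' := by rintro _ ⟨i, rfl⟩; exact ⟨i⁻¹, (hinv i).symm⟩ }
  have hconj : ∀ (g : M ⋊[lam] N) (i : I), g * f i * g⁻¹ ∈ Set.range f := by
    intro g i
    obtain ⟨m, n⟩ := g
    refine ⟨⟨n * ↑i * n⁻¹, hI.conj_mem (↑i) i.2 n⟩, ?_⟩
    set j : I := ⟨n * (↑i : N) * n⁻¹, hI.conj_mem (↑i) i.2 n⟩ with hj
    ext
    · show κ j = m * lam n (κ i) * lam (n * (↑i : N)⁻¹) ((lam n⁻¹) m⁻¹)
      have e1 : lam n (κ i) = κ j := (h2 i n).symm ▸ rfl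
      have e2 : lam (n * (↑i : N)⁻¹) ((lam n⁻¹) m⁻¹) = lam ((↑(j⁻¹) : N)) m⁻¹ := by
        rw [hcomp]
        have : n * (↑i : N)⁻¹ * n⁻¹ = (↑(j⁻¹) : N) := by
          simp [hj]; group
        rw [← this, mul_assoc]
      rw [e1, e2, mul_assoc, h1 j (lam ((↑(j⁻¹) : N)) m⁻¹), hcomp]
      have : (↑j : N) * (↑(j⁻¹) : N) = 1 := by rw [← Subgroup.coe_mul, mul_inv_cancel, Subgroup.coe_one]
      rw [this, map_one]
      simp [MulAut.one_apply]
    · show (↑j : N)⁻¹ = n * (↑i : N)⁻¹ * n⁻¹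
      simp [hj]; group
  have hnormal : H.Normal := by
    constructor
    rintro _ ⟨i, rfl⟩ g
    exact hconj g i
  refine ⟨hrel, H, rfl, hnormal, ?_⟩
  have hset : Set.range (fun i : I => (⟨κ i, 1⟩ : M ⋊[lam] N) * (⟨1, (↑i : N)⟩ : M ⋊[lam] N)⁻¹)
      = (H : Set (M ⋊[lam] N)) := by
    ext x
    simp only [Set.mem_range]
    constructor
    · rintro ⟨i, rfl⟩; exact ⟨i, (hrel i).symm⟩
    · rintro ⟨i, rfl⟩; exact ⟨i, hrel i⟩
  rw [hset]
  exact @Subgroup.normalClosure_eq_self _ _ H hnormal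
end
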